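/- arXiv:1903.00915 — 3 statements merged into one kernel-verified Lean document; each statement's English description precedes it below -/
import Mathlib

section
/- Let W ∈ B(Y,X) be nonzero and let A ∈ B(X,Y) be Wg-Drazin invertible. Then WP_{R((AW)^d)} ∈ B(Y,X) is Moore-Penrose invertible and A^{⊗,W} = ((AW)^d)² (WP_{R((AW)^d)})^† WA, and also A^{⊗,W} = (WP_{R((AW)^d)})^† ((WA)²)^ⓓ WA, where ((WA)²)^ⓓ is the core-EP inverse of (WA)². -/
open ContinuousLinearMap

variable {X Y : Type*}
  [NormedAddCommGroup X] [InnerProductSpace ℂ X] [CompleteSpace X]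
  [NormedAddCommGroup Y] [InnerProductSpace ℂ Y] [CompleteSpace Y]

/-- An operator is quasinilpotent if its spectrum equals `{0}`. -/
def IsQuasinilpotent (T : X →L[ℂ] X) : Prop := spectrum ℂ T = {0}

/-- `B` is the generalized Drazin inverse of `A`. -/
def IsGDrazinInv (A B : X →L[ℂ] X) : Prop :=
  A * B = B * A ∧ B * A * B = B ∧ IsQuasinilpotent (A - A * A * B)

/-- `B` is the Wg-Drazin inverse of `A` (relative to the weight `W`); quasinilpotence of
`A - AWBWA ∈ B(X,Y)` is taken relative to `W`, i.e. `W(A - AWBWA)` is quasinilpotent. -/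
def IsWgDrazinInv (W : Y →L[ℂ] X) (A B : X →L[ℂ] Y) : Prop :=
  A ∘L W ∘L B = B ∘L W ∘L A ∧
  B ∘L W ∘L A ∘L W ∘L B = B ∧
  IsQuasinilpotent (W ∘L (A - A ∘L W ∘L B ∘L W ∘L A))

/-- `P` is the orthogonal projection of the space onto the subspace `S`. -/
def IsOrthoProjOnto (P : X →L[ℂ] X) (S : Submodule ℂ X) : Prop :=
  P * P = P ∧ ContinuousLinearMap.adjoint P = P ∧ LinearMap.range (P : X →ₗ[ℂ] X) = S

/-- `P` is the idempotent with range `L` and kernel `M` (i.e. `P = P_{L,M}`). -/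
def IsIdempotentOnAlong (P : X →L[ℂ] X) (L M : Submodule ℂ X) : Prop :=
  P * P = P ∧ LinearMap.range (P : X →ₗ[ℂ] X) = L ∧ LinearMap.ker (P : X →ₗ[ℂ] X) = M

/-- Given the generalized Drazin inverse `Ad` of `A`, `B` is the core-EP inverse of `A`:
`AB` is the orthogonal projection onto `R(A^d)` and `R(B) ⊆ R(A^d)`. -/
def IsCoreEPInv (A Ad B : X →L[ℂ] X) : Prop :=
  IsOrthoProjOnto (A * B) (LinearMap.range (Ad : X →ₗ[ℂ] X)) ∧ LinearMap.range (B : X →ₗ[ℂ] X) ≤ LinearMap.range (Ad : X →ₗ[ℂ] X)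

/-- Given the generalized Drazin inverses `WAd` of `WA` and `AWd` of `AW`, `B` is the
weighted core-EP inverse of `A`: `WAWB` is the orthogonal projection onto `R((WA)^d)`
and `R(B) ⊆ R((AW)^d)`. -/
def IsWCoreEPInv (W : Y →L[ℂ] X) (A : X →L[ℂ] Y) (WAd : X →L[ℂ] X) (AWd : Y →L[ℂ] Y)
    (B : X →L[ℂ] Y) : Prop :=
  IsOrthoProjOnto (W ∘L A ∘L W ∘L B) (LinearMap.range (WAd : X →ₗ[ℂ] X)) ∧
  LinearMap.range (B : X →ₗ[ℂ] Y) ≤ LinearMap.range (AWd : Y →ₗ[ℂ] Y)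

/-- `B` is the group inverse of `A`. -/
def IsGroupInv (A B : X →L[ℂ] X) : Prop :=
  A * B = B * A ∧ B * A * B = B ∧ A * B * A = A

/-- `S` is the Moore-Penrose inverse of `T`. -/
def IsMPInv (T : Y →L[ℂ] X) (S : X →L[ℂ] Y) : Prop :=
  T ∘L S ∘L T = T ∧ S ∘L T ∘L S = S ∧
  ContinuousLinearMap.adjoint (T ∘L S) = T ∘L S ∧
  ContinuousLinearMap.adjoint (S ∘L T) = S ∘L T

/-- `C` is the core inverse of `T`: `TC` is the orthogonal projection onto `R(T)`
and `R(C) ⊆ R(T)`. -/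
def IsCoreInv (T C : X →L[ℂ] X) : Prop :=
  IsOrthoProjOnto (T * C) (LinearMap.range (T : X →ₗ[ℂ] X)) ∧ LinearMap.range (C : X →ₗ[ℂ] X) ≤ LinearMap.range (T : X →ₗ[ℂ] X)


set_option linter.unusedSectionVars false
set_option maxHeartbeats 4000000
open Filter

section AuxLemmas

lemma aux_qn_radius {T : X →L[ℂ] X} (h : IsQuasinilpotent T) : spectralRadius ℂ T = 0 := by
  rw [spectralRadius, h]; simp

lemma aux_qn_tendsto {T : X →L[ℂ] X} (h : IsQuasinilpotent T) :
    Tendsto (fun n : ℕ => ‖T ^ n‖ ^ (1 / n : ℝ)) atTop (nhds 0) := by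
  have h1 := spectrum.pow_norm_pow_one_div_tendsto_nhds_spectralRadius T
  rw [aux_qn_radius h] at h1
  have h2 : Tendsto (fun n : ℕ => (ENNReal.ofReal (‖T ^ n‖ ^ (1 / n : ℝ))).toReal)
      atTop (nhds ((0 : ENNReal).toReal)) :=
    (ENNReal.tendsto_toReal (by simp)).comp h1
  simpa [ENNReal.toReal_ofReal (Real.rpow_nonneg (norm_nonneg _) _)] using h2

/-- For every `0 < ε ≤ 1` and `c ≥ 0` there is `n ≥ 1` with `‖T^n‖ * c^n ≤ ε`. -/
lemma aux_qn_small {T : X →L[ℂ] X} (h : IsQuasinilpotent T) (c : ℝ) (hc : 0 ≤ c)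
    {ε : ℝ} (hε : 0 < ε) (hε1 : ε ≤ 1) : ∃ n : ℕ, 0 < n ∧ ‖T ^ n‖ * c ^ n ≤ ε := by
  have hδ : 0 < ε / (c + 1) := div_pos hε (by linarith)
  have h1 := (aux_qn_tendsto h).eventually_lt_const hδ
  rw [eventually_atTop] at h1
  obtain ⟨N, hN⟩ := h1
  refine ⟨N + 1, Nat.succ_pos N, ?_⟩
  have hn1 : (0 : ℝ) < (N + 1 : ℕ) := by positivity
  have hTn : ‖T ^ (N + 1)‖ < (ε / (c + 1)) ^ (N + 1) := by
    have h2 := hN (N + 1) (Nat.le_succ N)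
    have h3 : (‖T ^ (N + 1)‖ ^ (1 / ((N+1:ℕ) : ℝ))) ^ ((N + 1 : ℕ) : ℝ)
        < (ε / (c + 1)) ^ ((N + 1 : ℕ) : ℝ) := by
      apply Real.rpow_lt_rpow (Real.rpow_nonneg (norm_nonneg _) _) h2 hn1
    rw [← Real.rpow_natCast (ε / (c+1)) (N+1)] ;
    rw [← Real.rpow_mul (norm_nonneg _), one_div, inv_mul_cancel₀ (ne_of_gt hn1),
      Real.rpow_one] at h3
    exact h3
  calc ‖T ^ (N + 1)‖ * c ^ (N + 1)
      ≤ ‖T ^ (N + 1)‖ * (c + 1) ^ (N + 1) := by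
        apply mul_le_mul_of_nonneg_left (pow_le_pow_left₀ hc (by linarith) _) (norm_nonneg _)
    _ ≤ (ε / (c + 1)) ^ (N + 1) * (c + 1) ^ (N + 1) := by
        apply mul_le_mul_of_nonneg_right hTn.le (by positivity)
    _ = ε ^ (N + 1) := by
        rw [← mul_pow]; congr 1; field_simp
    _ ≤ ε := by
        rw [pow_succ]
        have h4 : ε ^ N ≤ 1 := pow_le_one₀ hε.le hε1
        nlinarith [pow_nonneg hε.le N]

lemma aux_zero_of_qn_left {x y z : X →L[ℂ] X} (hx : IsQuasinilpotent x)
    (h : ∀ n : ℕ, 0 < n → z = x ^ n * y ^ n) : z = 0 := by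
  rw [← norm_le_zero_iff]
  by_contra hz
  push_neg at hz
  set ε := min (‖z‖ / 2) 1 with hεdef
  have hεpos : 0 < ε := lt_min (by linarith) one_pos
  obtain ⟨n, hn, hsmall⟩ := aux_qn_small hx ‖y‖ (norm_nonneg _) hεpos (min_le_right _ _)
  have : ‖z‖ ≤ ‖x ^ n‖ * ‖y‖ ^ n := by
    rw [h n hn]
    calc ‖x ^ n * y ^ n‖ ≤ ‖x ^ n‖ * ‖y ^ n‖ := norm_mul_le _ _
      _ ≤ ‖x ^ n‖ * ‖y‖ ^ n := by
          apply mul_le_mul_of_nonneg_left (norm_pow_le' _ hn) (norm_nonneg _)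
  have h2 : ‖z‖ ≤ ε := this.trans hsmall
  have h3 : ε ≤ ‖z‖ / 2 := min_le_left _ _
  linarith

lemma aux_zero_of_qn_right {x y z : X →L[ℂ] X} (hx : IsQuasinilpotent x)
    (h : ∀ n : ℕ, 0 < n → z = y ^ n * x ^ n) : z = 0 := by
  rw [← norm_le_zero_iff]
  by_contra hz
  push_neg at hz
  set ε := min (‖z‖ / 2) 1 with hεdef
  have hεpos : 0 < ε := lt_min (by linarith) one_pos
  obtain ⟨n, hn, hsmall⟩ := aux_qn_small hx ‖y‖ (norm_nonneg _) hεpos (min_le_right _ _)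
  have : ‖z‖ ≤ ‖x ^ n‖ * ‖y‖ ^ n := by
    rw [h n hn]
    calc ‖y ^ n * x ^ n‖ ≤ ‖y ^ n‖ * ‖x ^ n‖ := norm_mul_le _ _
      _ ≤ ‖y‖ ^ n * ‖x ^ n‖ := by
          apply mul_le_mul_of_nonneg_right (norm_pow_le' _ hn) (norm_nonneg _)
      _ = ‖x ^ n‖ * ‖y‖ ^ n := mul_comm _ _
  have h2 : ‖z‖ ≤ ε := this.trans hsmall
  have h3 : ε ≤ ‖z‖ / 2 := min_le_left _ _
  linarith


lemma aux_qn_nontrivial {T : X →L[ℂ] X} (h : IsQuasinilpotent T) :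
    Nontrivial (X →L[ℂ] X) := by
  by_contra hn
  rw [not_nontrivial_iff_subsingleton] at hn
  have h0 : (0 : ℂ) ∈ spectrum ℂ T := by rw [h]; rfl
  rw [spectrum.mem_iff] at h0
  exact h0 (isUnit_of_subsingleton _)

lemma aux_qn_nontrivialX {T : X →L[ℂ] X} (h : IsQuasinilpotent T) : Nontrivial X := by
  have h1 := aux_qn_nontrivial h
  by_contra hn
  rw [not_nontrivial_iff_subsingleton] at hn
  have : Subsingleton (X →L[ℂ] X) := ⟨fun f g => by ext x; exact Subsingleton.elim _ _⟩
  exact (not_subsingleton_iff_nontrivial.mpr h1) this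

lemma aux_qn_mul {a b : X →L[ℂ] X} (ha : IsQuasinilpotent a) (hab : a * b = b * a)
    (hX : Nontrivial X) :
    IsQuasinilpotent (a * b) := by
  haveI := hX
  have hrad : spectralRadius ℂ (a * b) = 0 := by
    have hle : ∀ n : ℕ, spectralRadius ℂ (a * b)
        ≤ ((‖a ^ (n+1)‖₊ : ENNReal) ^ (1 / (n+1) : ℝ)) * (‖b‖₊ : ENNReal) := by
      intro n
      have h1 := spectrum.spectralRadius_le_pow_nnnorm_pow_one_div ℂ (a * b) n
      have hcomm : Commute a b := hab
      have h2 : ‖(a * b) ^ (n+1)‖₊ ≤ ‖a ^ (n+1)‖₊ * ‖b‖₊ ^ (n+1) := by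
        rw [hcomm.mul_pow]
        calc ‖a ^ (n+1) * b ^ (n+1)‖₊ ≤ ‖a ^ (n+1)‖₊ * ‖b ^ (n+1)‖₊ := nnnorm_mul_le _ _
          _ ≤ ‖a ^ (n+1)‖₊ * ‖b‖₊ ^ (n+1) := by
              exact mul_le_mul_of_nonneg_left (nnnorm_pow_le' _ (Nat.succ_pos n)) zero_le
      have h3 : ((‖(a*b) ^ (n+1)‖₊ : ENNReal)) ^ (1 / (n+1) : ℝ)
          ≤ ((‖a ^ (n+1)‖₊ : ENNReal) ^ (1 / (n+1) : ℝ)) * (‖b‖₊ : ENNReal) := by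
        calc ((‖(a*b) ^ (n+1)‖₊ : ENNReal)) ^ (1 / (n+1) : ℝ)
            ≤ ((‖a ^ (n+1)‖₊ * ‖b‖₊ ^ (n+1) : NNReal) : ENNReal) ^ (1 / (n+1) : ℝ) := by
              apply ENNReal.rpow_le_rpow _ (by positivity)
              exact_mod_cast h2
          _ = ((‖a ^ (n+1)‖₊ : ENNReal) ^ (1 / (n+1) : ℝ))
              * (((‖b‖₊ : ENNReal)) ^ (n+1 : ℕ)) ^ (1 / (n+1) : ℝ) := by
              rw [ENNReal.coe_mul, ENNReal.coe_pow,
                ENNReal.mul_rpow_of_nonneg _ _ (by positivity)]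
          _ = ((‖a ^ (n+1)‖₊ : ENNReal) ^ (1 / (n+1) : ℝ)) * (‖b‖₊ : ENNReal) := by
              congr 1
              rw [← ENNReal.rpow_natCast (‖b‖₊ : ENNReal) (n+1), ← ENNReal.rpow_mul]
              have hx : ((n+1:ℕ):ℝ) * (1/(n+1):ℝ) = 1 := by
                have : ((n:ℝ)+1) ≠ 0 := by positivity
                push_cast
                field_simp
              norm_cast at hx ⊢
              rw [hx, ENNReal.rpow_one]
      refine h1.trans ?_
      have hone : ‖(1 : X →L[ℂ] X)‖₊ = 1 := by
        simp [nnnorm_one]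
      rw [hone]
      simpa using h3
    have htend : Tendsto (fun n : ℕ =>
        ((‖a ^ (n+1)‖₊ : ENNReal) ^ (1 / (n+1) : ℝ)) * (‖b‖₊ : ENNReal)) atTop (nhds 0) := by
      have h1 := spectrum.pow_nnnorm_pow_one_div_tendsto_nhds_spectralRadius a
      rw [aux_qn_radius ha] at h1
      have h2 : Tendsto (fun n : ℕ => (‖a ^ (n+1)‖₊ : ENNReal) ^ (1 / (n+1) : ℝ)) atTop
          (nhds 0) := by
        have h3 := h1.comp (tendsto_add_atTop_nat 1)
        simpa [Function.comp_def, one_div] using h3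
      have h4 := ENNReal.Tendsto.mul_const h2 (b := (‖b‖₊ : ENNReal)) (Or.inr ENNReal.coe_ne_top)
      simpa using h4
    have := ge_of_tendsto' htend hle
    exact le_antisymm this zero_le
  have hsub : spectrum ℂ (a * b) ⊆ {0} := by
    intro z hz
    have h1 : (‖z‖₊ : ENNReal) ≤ spectralRadius ℂ (a * b) := le_iSup₂ (f := fun z _ => (‖z‖₊ : ENNReal)) z hz
    rw [hrad, nonpos_iff_eq_zero] at h1
    simpa using h1
  have hne : (spectrum ℂ (a * b)).Nonempty := spectrum.nonempty _
  rw [IsQuasinilpotent]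
  apply Set.eq_of_subset_of_subset hsub
  intro z hz
  obtain ⟨w, hw⟩ := hne
  have := hsub hw
  simp only [Set.mem_singleton_iff] at this hz ⊢
  rw [hz, ← this]
  exact hw

lemma aux_qn_swap {C : X →L[ℂ] Y} {W : Y →L[ℂ] X} (h : IsQuasinilpotent (W ∘L C))
    (hY : Nontrivial (Y →L[ℂ] Y)) : IsQuasinilpotent (C ∘L W) := by
  haveI := hY
  have hsub : spectrum ℂ (C ∘L W) ⊆ {0} := by
    intro z hz
    simp only [Set.mem_singleton_iff]
    by_contra hz0
    have hznot : z ∉ spectrum ℂ (W ∘L C) := by rw [h]; simpa using hz0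
    rw [spectrum.notMem_iff] at hznot
    rw [spectrum.mem_iff] at hz
    apply hz
    obtain ⟨u, hu⟩ := hznot
    set R : X →L[ℂ] X := (u.inv : X →L[ℂ] X) with hR
    have hu1 : (algebraMap ℂ (X →L[ℂ] X) z - W ∘L C) * R = 1 := by
      rw [hR, ← hu]; exact u.val_inv
    have hu2 : R * (algebraMap ℂ (X →L[ℂ] X) z - W ∘L C) = 1 := by
      rw [hR, ← hu]; exact u.inv_val
    have hu1' : ∀ x : X, z • R x - W (C (R x)) = x := by
      intro x
      have := congrArg (fun f => f x) hu1
      simpa [Algebra.algebraMap_eq_smul_one, mul_apply_eq_comp, sub_apply, smul_apply] using this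
    have hu2' : ∀ x : X, z • R x - R (W (C x)) = x := by
      intro x
      have := congrArg (fun f => f x) hu2
      simpa [Algebra.algebraMap_eq_smul_one, mul_apply_eq_comp, sub_apply, smul_apply] using this
    set R' : Y →L[ℂ] Y := z⁻¹ • (1 + C ∘L R ∘L W) with hR'
    have hR'y : ∀ y : Y, R' y = z⁻¹ • (y + C (R (W y))) := by
      intro y; simp [hR', comp_apply]
    rw [isUnit_iff_exists]
    refine ⟨R', ?_, ?_⟩
    · ext y
      simp only [hR', mul_apply_eq_comp, sub_apply, add_apply, smul_apply, one_apply_eq_self, comp_apply,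
        Algebra.algebraMap_eq_smul_one, map_add, map_sub, map_smul, smul_add, smul_sub,
        smul_smul, inv_mul_cancel₀ hz0, one_smul, mul_inv_cancel₀ hz0]
      have h7 : C (R (W y)) - z⁻¹ • C (W (C (R (W y)))) = z⁻¹ • C (W y) := by
        have h6 := congrArg (fun v => z⁻¹ • C v) (hu1' (W y))
        simpa [map_sub, map_smul, smul_sub, smul_smul, inv_mul_cancel₀ hz0] using h6
      rw [h7]
      abel
    · ext y
      simp only [hR', mul_apply_eq_comp, sub_apply, add_apply, smul_apply, one_apply_eq_self, comp_apply,
        Algebra.algebraMap_eq_smul_one, map_add, map_sub, map_smul, smul_add, smul_sub,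
        smul_smul, inv_mul_cancel₀ hz0, one_smul, mul_inv_cancel₀ hz0]
      have h9 : C (R (W y)) - z⁻¹ • C (R (W (C (W y)))) = z⁻¹ • C (W y) := by
        have h6 := congrArg (fun v => z⁻¹ • C v) (hu2' (W y))
        simpa [map_sub, map_smul, smul_sub, smul_smul, inv_mul_cancel₀ hz0] using h6
      rw [show y + C (R (W y)) - (z⁻¹ • C (W y) + z⁻¹ • C (R (W (C (W y)))))
          = y + (C (R (W y)) - z⁻¹ • C (R (W (C (W y))))) - z⁻¹ • C (W y) from by abel, h9]
      abel
  have hne : (spectrum ℂ (C ∘L W)).Nonempty := spectrum.nonempty _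
  rw [IsQuasinilpotent]
  apply Set.eq_of_subset_of_subset hsub
  intro w hw
  obtain ⟨v, hv⟩ := hne
  have := hsub hv
  simp only [Set.mem_singleton_iff] at this hw ⊢
  rw [hw, ← this]
  exact hv

lemma aux_proj_fix {P : X →L[ℂ] X} {S : Submodule ℂ X} (h : IsOrthoProjOnto P S)
    {x : X} (hx : x ∈ S) : P x = x := by
  rw [← h.2.2] at hx
  obtain ⟨y, rfl⟩ := hx
  have := congrArg (fun f => f y) h.1
  simpa [mul_apply_eq_comp] using this

lemma aux_proj_unique {P P' : X →L[ℂ] X} {S : Submodule ℂ X}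
    (h : IsOrthoProjOnto P S) (h' : IsOrthoProjOnto P' S) : P = P' := by
  have h1 : P' ∘L P = P := by
    ext x; exact aux_proj_fix h' (h.2.2 ▸ LinearMap.mem_range_self _ x)
  have h2 : P ∘L P' = P' := by
    ext x; exact aux_proj_fix h (h'.2.2 ▸ LinearMap.mem_range_self _ x)
  have h3 : P ∘L P' = P := by
    have h4 := congrArg ContinuousLinearMap.adjoint h1
    rwa [adjoint_comp, h.2.1, h'.2.1] at h4
  exact h3.symm.trans h2

lemma aux_mp_unique {T : Y →L[ℂ] X} {S S' : X →L[ℂ] Y}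
    (h : IsMPInv T S) (h' : IsMPInv T S') : S = S' := by
  obtain ⟨h1, h2, h3, h4⟩ := h
  obtain ⟨h1', h2', h3', h4'⟩ := h'
  have e1 : T ∘L S = adjoint S ∘L adjoint T := h3.symm.trans (adjoint_comp T S)
  have e1' : T ∘L S' = adjoint S' ∘L adjoint T := h3'.symm.trans (adjoint_comp T S')
  have e2 : S ∘L T = adjoint T ∘L adjoint S := h4.symm.trans (adjoint_comp S T)
  have e2' : S' ∘L T = adjoint T ∘L adjoint S' := h4'.symm.trans (adjoint_comp S' T)
  have eT : adjoint T = (adjoint T ∘L adjoint S') ∘L adjoint T := by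
    conv_lhs => rw [← h1']
    rw [adjoint_comp T (S' ∘L T), adjoint_comp S' T]
  have hTS : T ∘L S = T ∘L S' := by
    calc T ∘L S = adjoint S ∘L adjoint T := e1
      _ = adjoint S ∘L ((adjoint T ∘L adjoint S') ∘L adjoint T) := by rw [← eT]
      _ = (adjoint S ∘L adjoint T) ∘L (adjoint S' ∘L adjoint T) := rfl
      _ = (T ∘L S) ∘L (T ∘L S') := by rw [← e1, ← e1']
      _ = (T ∘L S ∘L T) ∘L S' := rfl
      _ = T ∘L S' := by rw [h1]
  have hST : S ∘L T = S' ∘L T := by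
    calc S ∘L T = adjoint T ∘L adjoint S := e2
      _ = ((adjoint T ∘L adjoint S') ∘L adjoint T) ∘L adjoint S := by rw [← eT]
      _ = (adjoint T ∘L adjoint S') ∘L (adjoint T ∘L adjoint S) := rfl
      _ = (S' ∘L T) ∘L (S ∘L T) := by rw [← e2, ← e2']
      _ = S' ∘L (T ∘L S ∘L T) := rfl
      _ = S' ∘L T := by rw [h1]
  calc S = S ∘L T ∘L S := h2.symm
    _ = (S ∘L T) ∘L S := rfl
    _ = (S' ∘L T) ∘L S := by rw [hST]
    _ = S' ∘L (T ∘L S) := rfl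
    _ = S' ∘L (T ∘L S') := by rw [hTS]
    _ = S' ∘L T ∘L S' := rfl
    _ = S' := h2'

lemma aux_pow_idem {p : X →L[ℂ] X} (hp : p * p = p) : ∀ n : ℕ, 0 < n → p ^ n = p := by
  intro n hn
  induction n with
  | zero => omega
  | succ m ih =>
    rcases Nat.eq_zero_or_pos m with hm | hm
    · simp [hm]
    · rw [pow_succ, ih hm, hp]

lemma aux_gdrazin_unique {a b b' : X →L[ℂ] X}
    (hb : IsGDrazinInv a b) (hb' : IsGDrazinInv a b') : b = b' := by
  obtain ⟨hc, hi, hq⟩ := hb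
  obtain ⟨hc', hi', hq'⟩ := hb'
  have hab2' : a * b' * b' = b' := by
    calc a * b' * b' = b' * a * b' := by rw [hc']
      _ = b' := hi'
  have hidem : (a * b) * (a * b) = a * b := by
    calc (a * b) * (a * b) = a * (b * a * b) := by noncomm_ring
      _ = a * b := by rw [hi]
  have hidem' : (a * b') * (a * b') = a * b' := by
    calc (a * b') * (a * b') = a * (b' * a * b') := by noncomm_ring
      _ = a * b' := by rw [hi']
  set p : X →L[ℂ] X := 1 - a * b with hp
  set q : X →L[ℂ] X := 1 - a * b' with hq2
  have hpidem : p * p = p := by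
    have e : p * p = 1 - a * b - a * b + (a * b) * (a * b) := by rw [hp]; noncomm_ring
    rw [e, hidem, hp]; abel
  have hqidem : q * q = q := by
    have e : q * q = 1 - a * b' - a * b' + (a * b') * (a * b') := by rw [hq2]; noncomm_ring
    rw [e, hidem', hq2]; abel
  have F1 : a * p = a - a * a * b := by rw [hp]; noncomm_ring
  have F2 : p * a = a - a * a * b := by
    have e : p * a = a - a * (b * a) := by rw [hp]; noncomm_ring
    rw [e, ← hc]; noncomm_ring
  have F1' : a * q = a - a * a * b' := by rw [hq2]; noncomm_ring
  have F2' : q * a = a - a * a * b' := by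
    have e : q * a = a - a * (b' * a) := by rw [hq2]; noncomm_ring
    rw [e, ← hc']; noncomm_ring
  have hqnp : IsQuasinilpotent (a * p) := by rw [F1]; exact hq
  have hqnq : IsQuasinilpotent (a * q) := by rw [F1']; exact hq'
  have hcpa : Commute p a := F2.trans F1.symm
  have hcqa : Commute q a := F2'.trans F1'.symm
  -- claim 1 : p * (a * b') = 0
  have claim1 : p * (a * b') = 0 := by
    apply aux_zero_of_qn_left hqnp (y := b')
    intro n hn
    have hcab' : Commute a b' := hc'
    calc p * (a * b') = p * (a * b') ^ n := by rw [aux_pow_idem hidem' n hn]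
      _ = p * (a ^ n * b' ^ n) := by rw [hcab'.mul_pow]
      _ = (p * a ^ n) * b' ^ n := by noncomm_ring
      _ = (a ^ n * p) * b' ^ n := by rw [(hcpa.pow_right n).eq]
      _ = (a ^ n * p ^ n) * b' ^ n := by rw [aux_pow_idem hpidem n hn]
      _ = (a * p) ^ n * b' ^ n := by rw [(hcpa.symm.mul_pow n)]
  -- claim 2 : (a * b) * q = 0
  have claim2 : (a * b) * q = 0 := by
    apply aux_zero_of_qn_right hqnq (y := b)
    intro n hn
    have hcab : Commute a b := hc
    calc (a * b) * q = (a * b) ^ n * q := by rw [aux_pow_idem hidem n hn]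
      _ = (a ^ n * b ^ n) * q := by rw [hcab.mul_pow]
      _ = (b ^ n * a ^ n) * q := by rw [(hcab.pow_pow n n).eq]
      _ = b ^ n * (a ^ n * q) := by noncomm_ring
      _ = b ^ n * (a ^ n * q ^ n) := by rw [aux_pow_idem hqidem n hn]
      _ = b ^ n * (a * q) ^ n := by rw [(hcqa.symm.mul_pow n)]
  -- hence p = q
  have hpq : p = q := by
    have e1 : p = p * q := by
      have : p * (1 - q) = p * (a * b') := by rw [hq2]; noncomm_ring
      rw [claim1] at this
      have e2 : p - p * q = 0 := by rw [← this]; noncomm_ring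
      have := sub_eq_zero.mp e2
      exact this
    have e3 : q = p * q := by
      have : (1 - p) * q = (a * b) * q := by rw [hp]; noncomm_ring
      rw [claim2] at this
      have e4 : q - p * q = 0 := by rw [← this]; noncomm_ring
      exact sub_eq_zero.mp e4
    exact e1.trans e3.symm
  have hab_eq : a * b = a * b' := by
    have h5 : a * b = 1 - p := by rw [hp]; abel
    have h6 : a * b' = 1 - q := by rw [hq2]; abel
    rw [h5, h6, hpq]
  calc b = b * a * b := hi.symm
    _ = b * (a * b) := by noncomm_ring
    _ = b * (a * b') := by rw [hab_eq]
    _ = (b * a) * b' := by noncomm_ring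
    _ = (a * b) * b' := by rw [hc]
    _ = (a * b') * b' := by rw [hab_eq]
    _ = b' := hab2'


end AuxLemmas

theorem stmt12
    (W : Y →L[ℂ] X) (hW : W ≠ 0)
    (A Adw : X →L[ℂ] Y) (hAdw : IsWgDrazinInv W A Adw)
    (WAd : X →L[ℂ] X) (hWAd : IsGDrazinInv (W ∘L A) WAd)
    (AWd : Y →L[ℂ] Y) (hAWd : IsGDrazinInv (A ∘L W) AWd)
    (Ace : X →L[ℂ] Y) (hAce : IsWCoreEPInv W A WAd AWd Ace)
    (Aot : X →L[ℂ] Y) (hAot : Aot = Ace ∘L W ∘L Ace ∘L W ∘L A)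
    (PAW : Y →L[ℂ] Y) (hPAW : IsOrthoProjOnto PAW (LinearMap.range (AWd : Y →ₗ[ℂ] Y))) :
    (∃ S : X →L[ℂ] Y, IsMPInv (W ∘L PAW) S) ∧
    (∃ D C : X →L[ℂ] X,
      IsGDrazinInv ((W ∘L A) * (W ∘L A)) D ∧ IsCoreEPInv ((W ∘L A) * (W ∘L A)) D C) ∧
    ∀ S : X →L[ℂ] Y, IsMPInv (W ∘L PAW) S →
      (Aot = AWd ∘L AWd ∘L S ∘L W ∘L A ∧
        ∀ D C : X →L[ℂ] X,
          IsGDrazinInv ((W ∘L A) * (W ∘L A)) D → IsCoreEPInv ((W ∘L A) * (W ∘L A)) D C →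
            Aot = S ∘L C ∘L W ∘L A) := by
  obtain ⟨hc, hb, hq3⟩ := hAdw
  -- pointwise versions of the Wg-Drazin axioms
  have f1 : ∀ x : X, A (W (Adw x)) = Adw (W (A x)) := fun x => by
    have := ContinuousLinearMap.ext_iff.mp hc x
    simpa [comp_apply] using this
  have f2 : ∀ x : X, Adw (W (A (W (Adw x)))) = Adw x := fun x => by
    have := ContinuousLinearMap.ext_iff.mp hb x
    simpa [comp_apply] using this
  have f2' : ∀ x : X, Adw (W (Adw (W (A x)))) = Adw x := fun x => by
    rw [← f1 x]; exact f2 x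
  -- nontriviality
  haveI hXnt : Nontrivial X := aux_qn_nontrivialX hq3
  have hYnt : Nontrivial Y := by
    by_contra hn
    rw [not_nontrivial_iff_subsingleton] at hn
    apply hW
    ext y
    calc W y = W 0 := by rw [Subsingleton.elim y 0]
      _ = 0 := map_zero W
  have hYY : Nontrivial (Y →L[ℂ] Y) := by
    refine ⟨1, 0, fun h => ?_⟩
    obtain ⟨y, hy⟩ := exists_ne (0 : Y)
    apply hy
    have := ContinuousLinearMap.ext_iff.mp h y
    simpa using this
  -- W∘Adw is the g-Drazin inverse of W∘A, and Adw∘W of A∘W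
  have hWB : IsGDrazinInv (W ∘L A) (W ∘L Adw) := by
    refine ⟨?_, ?_, ?_⟩
    · ext x; simp only [mul_apply_eq_comp, comp_apply]; rw [f1]
    · ext x; simp only [mul_apply_eq_comp, comp_apply]; rw [f2]
    · have e : (W ∘L A) - (W ∘L A) * (W ∘L A) * (W ∘L Adw)
          = W ∘L (A - A ∘L W ∘L Adw ∘L W ∘L A) := by
        ext x
        simp only [mul_apply_eq_comp, comp_apply, sub_apply, map_sub]
        rw [f1]
      rw [e]; exact hq3
  have hBW : IsGDrazinInv (A ∘L W) (Adw ∘L W) := by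
    refine ⟨?_, ?_, ?_⟩
    · ext y; simp only [mul_apply_eq_comp, comp_apply]; rw [f1]
    · ext y; simp only [mul_apply_eq_comp, comp_apply]; rw [f2]
    · have e : (A ∘L W) - (A ∘L W) * (A ∘L W) * (Adw ∘L W)
          = (A - A ∘L W ∘L Adw ∘L W ∘L A) ∘L W := by
        ext y
        simp only [mul_apply_eq_comp, comp_apply, sub_apply, map_sub]
        rw [f1]
      rw [e]
      exact aux_qn_swap hq3 hYY
  have hWAdEq : WAd = W ∘L Adw := aux_gdrazin_unique hWAd hWB
  have hAWdEq : AWd = Adw ∘L W := aux_gdrazin_unique hAWd hBW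
  -- the two orthogonal projections
  obtain ⟨hProj, hAceRange⟩ := hAce
  set P : X →L[ℂ] X := W ∘L A ∘L W ∘L Ace with hPdef
  have hP : IsOrthoProjOnto P (LinearMap.range ((W ∘L Adw : X →L[ℂ] X) : X →ₗ[ℂ] X)) := by rwa [hWAdEq] at hProj
  have hQ : IsOrthoProjOnto PAW (LinearMap.range ((Adw ∘L W : Y →L[ℂ] Y) : Y →ₗ[ℂ] Y)) := by rwa [hAWdEq] at hPAW
  have hAceR : LinearMap.range (Ace : X →ₗ[ℂ] Y) ≤ LinearMap.range ((Adw ∘L W : Y →L[ℂ] Y) : Y →ₗ[ℂ] Y) := by rwa [hAWdEq] at hAceRange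
  -- range memberships, pointwise
  have fPmem : ∀ x : X, ∃ z, W (Adw z) = P x := fun x => by
    have : P x ∈ LinearMap.range ((W ∘L Adw : X →L[ℂ] X) : X →ₗ[ℂ] X) := hP.2.2 ▸ LinearMap.mem_range_self _ x
    obtain ⟨z, hz⟩ := this
    exact ⟨z, by simpa [comp_apply] using hz⟩
  have fQmem : ∀ y : Y, ∃ z, Adw (W z) = PAW y := fun y => by
    have : PAW y ∈ LinearMap.range ((Adw ∘L W : Y →L[ℂ] Y) : Y →ₗ[ℂ] Y) := hQ.2.2 ▸ LinearMap.mem_range_self _ y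
    obtain ⟨z, hz⟩ := this
    exact ⟨z, by simpa [comp_apply] using hz⟩
  have fAce : ∀ x : X, ∃ z, Adw (W z) = Ace x := fun x => by
    have : Ace x ∈ LinearMap.range ((Adw ∘L W : Y →L[ℂ] Y) : Y →ₗ[ℂ] Y) := hAceR (LinearMap.mem_range_self _ x)
    obtain ⟨z, hz⟩ := this
    exact ⟨z, by simpa [comp_apply] using hz⟩
  -- projection fixing lemmas
  have f3 : ∀ x : X, P (W (Adw x)) = W (Adw x) := fun x =>
    aux_proj_fix hP ⟨x, by simp [comp_apply]⟩
  have f4 : ∀ x : X, PAW (Adw x) = Adw x := fun x => by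
    apply aux_proj_fix hQ
    exact ⟨A (W (Adw x)), by simpa [comp_apply] using f2 x⟩
  have f5 : ∀ y : Y, P (W (PAW y)) = W (PAW y) := fun y => by
    obtain ⟨z, hz⟩ := fQmem y
    rw [← hz]
    exact f3 (W z)
  have f6 : ∀ x : X, W (Adw (W (A (P x)))) = P x := fun x => by
    obtain ⟨z, hz⟩ := fPmem x
    rw [← hz]
    exact congrArg W (f2 z)
  have f7 : ∀ y : Y, Adw (W (A (W (PAW y)))) = PAW y := fun y => by
    obtain ⟨z, hz⟩ := fQmem y
    rw [← hz]
    exact f2 (W z)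
  -- explicit formula for the weighted core-EP inverse
  have hAceEq : Ace = Adw ∘L W ∘L Adw ∘L W ∘L A ∘L P := by
    ext x
    obtain ⟨z, hz⟩ := fAce x
    have k1 : W (A (W (Ace x))) = P x := by simp [hPdef, comp_apply]
    have k2 : W (A (W (Adw (W (Adw (W (A (P x)))))))) = P x := by
      simp only [f1, f2, f2', f6]
    have k3 : Ace x = Adw (W (A (W (Ace x)))) := by
      rw [← hz]
      exact (f2 (W z)).symm
    calc Ace x = Adw (W (A (W (Ace x)))) := k3
      _ = Adw (P x) := by rw [k1]
      _ = Adw (W (A (W (Adw (W (Adw (W (A (P x))))))))) := by rw [k2]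
      _ = Adw (W (Adw (W (A (P x))))) := by rw [f1 (W (Adw (W (A (P x))))), f2']
      _ = (Adw ∘L W ∘L Adw ∘L W ∘L A ∘L P) x := by simp [comp_apply]
  -- the Moore–Penrose inverse of W ∘L PAW
  set S₀ : X →L[ℂ] Y := Adw ∘L W ∘L A ∘L P with hS₀def
  have hTS : (W ∘L PAW) ∘L S₀ = P := by
    ext x
    simp only [hS₀def, comp_apply]
    rw [f4, f6]
  have hST : S₀ ∘L (W ∘L PAW) = PAW := by
    ext y
    simp only [hS₀def, comp_apply]
    rw [f5, f7]
  have hMPS₀ : IsMPInv (W ∘L PAW) S₀ := by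
    refine ⟨?_, ?_, ?_, ?_⟩
    · calc (W ∘L PAW) ∘L S₀ ∘L (W ∘L PAW) = ((W ∘L PAW) ∘L S₀) ∘L (W ∘L PAW) := rfl
        _ = P ∘L (W ∘L PAW) := by rw [hTS]
        _ = W ∘L PAW := by ext y; simpa [comp_apply] using f5 y
    · calc S₀ ∘L (W ∘L PAW) ∘L S₀ = (S₀ ∘L (W ∘L PAW)) ∘L S₀ := rfl
        _ = PAW ∘L S₀ := by rw [hST]
        _ = S₀ := by ext x; simp only [hS₀def, comp_apply]; rw [f4]
    · rw [show (W ∘L PAW) ∘L S₀ = P from hTS]; exact hP.2.1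
    · rw [show S₀ ∘L (W ∘L PAW) = PAW from hST]; exact hQ.2.1
  -- the g-Drazin and core-EP inverse of (W∘A)²
  set V : X →L[ℂ] X := W ∘L A with hVdef
  set WB : X →L[ℂ] X := W ∘L Adw with hWBdef
  obtain ⟨g1, g2, g3⟩ := hWB
  have hDgd : IsGDrazinInv (V * V) (WB * WB) := by
    have cVW : Commute V WB := g1
    have c2 : Commute (V * V) WB := Commute.mul_left cVW cVW
    have c4 : Commute (V * V) (WB * WB) := c2.mul_right c2
    refine ⟨c4.eq, ?_, ?_⟩
    · ext x
      simp only [mul_apply_eq_comp, hVdef, hWBdef, comp_apply]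
      simp only [f1, f2, f2']
    · have e : (V * V) - (V * V) * (V * V) * (WB * WB)
          = (V - V * V * WB) * (V + V * V * WB) := by
        ext x
        simp only [mul_apply_eq_comp, sub_apply, add_apply, map_add, map_sub, hVdef, hWBdef, comp_apply]
        simp only [f1, f2, f2']
        abel
      have hcomm : (V - V * V * WB) * (V + V * V * WB)
          = (V + V * V * WB) * (V - V * V * WB) := by
        ext x
        simp only [mul_apply_eq_comp, sub_apply, add_apply, map_add, map_sub, hVdef, hWBdef, comp_apply]
        simp only [f1, f2, f2']
        abel
      rw [e]
      exact aux_qn_mul g3 hcomm hXnt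
  have hrange1 : LinearMap.range ((WB * WB : X →L[ℂ] X) : X →ₗ[ℂ] X) = LinearMap.range (WB : X →ₗ[ℂ] X) := by
    apply le_antisymm
    · rintro _ ⟨x, rfl⟩
      exact ⟨W (Adw x), by simp [mul_apply_eq_comp, hWBdef, comp_apply]⟩
    · rintro _ ⟨x, rfl⟩
      refine ⟨W (A x), ?_⟩
      simp only [mul_apply_eq_comp, hWBdef, comp_apply]
      exact congrArg W (f2' x)
  have hPD : IsOrthoProjOnto P (LinearMap.range ((WB * WB : X →L[ℂ] X) : X →ₗ[ℂ] X)) :=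
    ⟨hP.1, hP.2.1, hP.2.2.trans hrange1.symm⟩
  have keyC : ∀ x : X, V (V (WB (WB (P x)))) = P x := fun x => by
    obtain ⟨z, hz⟩ := fPmem x
    rw [← hz]
    simp only [hVdef, hWBdef, comp_apply]
    simp only [f1, f2, f2']
  have hVVC : (V * V) * ((WB * WB) * P) = P := by
    ext x
    simp only [mul_apply_eq_comp]
    exact keyC x
  have hDCep : IsCoreEPInv (V * V) (WB * WB) ((WB * WB) * P) := by
    refine ⟨?_, ?_⟩
    · rw [show (V * V) * ((WB * WB) * P) = P from hVVC]
      exact ⟨hPD.1, hPD.2.1, hPD.2.2⟩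
    · rintro _ ⟨x, rfl⟩
      exact ⟨P x, by simp [mul_apply_eq_comp]⟩
  refine ⟨⟨S₀, hMPS₀⟩, ⟨WB * WB, (WB * WB) * P, hDgd, hDCep⟩, ?_⟩
  intro S hS
  have hSeq : S = S₀ := aux_mp_unique hS hMPS₀
  constructor
  · -- Aot = AWd ∘L AWd ∘L S ∘L W ∘L A
    rw [hAot, hAceEq, hAWdEq, hSeq, hS₀def]
    ext x
    simp only [comp_apply]
    simp only [f1, f2, f2', f3, f5, f6]
  · intro D C hD hC
    have hDeq : D = WB * WB := aux_gdrazin_unique hD hDgd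
    rw [hDeq] at hC
    obtain ⟨hC1, hC2⟩ := hC
    have hVC' : (V * V) * C = P := by
      apply aux_proj_unique _ hPD
      exact hC1
    have hCeq : C = (WB * WB) * P := by
      ext x
      have hx : C x ∈ LinearMap.range ((WB * WB : X →L[ℂ] X) : X →ₗ[ℂ] X) := hC2 (LinearMap.mem_range_self _ x)
      rw [hrange1] at hx
      obtain ⟨z, hz⟩ := hx
      have e1 : WB (WB (V (V (C x)))) = C x := by
        rw [← hz]
        simp only [hVdef, hWBdef, ContinuousLinearMap.coe_coe, comp_apply]
        simp only [f1, f2, f2']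
      have e2 : V (V (C x)) = P x := by
        have := ContinuousLinearMap.ext_iff.mp hVC' x
        simpa [mul_apply_eq_comp] using this
      calc C x = WB (WB (V (V (C x)))) := e1.symm
        _ = WB (WB (P x)) := by rw [e2]
        _ = ((WB * WB) * P) x := by simp [mul_apply_eq_comp]
    rw [hAot, hAceEq, hSeq, hS₀def, hCeq]
    ext x
    simp only [mul_apply_eq_comp, hWBdef, hVdef, comp_apply]
    simp only [f1, f2, f2', f3, f5, f6]
end

section
/- Let W ∈ B(Y,X) be nonzero and let A ∈ B(X,Y) be Wg-Drazin invertible. Then (AW)³(AW)^d ∈ B(Y) is group invertible (hence core invertible) and A^{⊗,W} = ((AW)³(AW)^d)^{#⃝} A W A^{ⓓ,W} W A, where ((AW)³(AW)^d)^{#⃝} denotes the core inverse of (AW)³(AW)^d. -/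
open ContinuousLinearMap

variable {X Y : Type*}
  [NormedAddCommGroup X] [InnerProductSpace ℂ X] [CompleteSpace X]
  [NormedAddCommGroup Y] [InnerProductSpace ℂ Y] [CompleteSpace Y]

open Filter Topology

set_option linter.unusedSectionVars false
set_option maxHeartbeats 1000000

private lemma isUnit_swap (f : X →L[ℂ] Y) (g : Y →L[ℂ] X) {lam : ℂ} (hlam : lam ≠ 0)
    (h : IsUnit (algebraMap ℂ (X →L[ℂ] X) lam - (g ∘L f))) :
    IsUnit (algebraMap ℂ (Y →L[ℂ] Y) lam - (f ∘L g)) := by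
  obtain ⟨u, hu⟩ := h
  set V : X →L[ℂ] X := (↑u⁻¹ : X →L[ℂ] X) with hVdef
  have hV1 : (algebraMap ℂ (X →L[ℂ] X) lam - (g ∘L f)) * V = 1 := by
    rw [← hu]; exact u.mul_inv
  have hV2 : V * (algebraMap ℂ (X →L[ℂ] X) lam - (g ∘L f)) = 1 := by
    rw [← hu]; exact u.inv_mul
  have hV1' : ∀ x, lam • V x - g (f (V x)) = x := by
    intro x
    have h0 := DFunLike.congr_fun hV1 x
    simpa [Algebra.algebraMap_eq_smul_one, ContinuousLinearMap.mul_apply,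
      ContinuousLinearMap.sub_apply, ContinuousLinearMap.smul_apply,
      ContinuousLinearMap.comp_apply] using h0
  have hV2' : ∀ x, lam • V x - V (g (f x)) = x := by
    intro x
    have h0 := DFunLike.congr_fun hV2 x
    simpa [Algebra.algebraMap_eq_smul_one, ContinuousLinearMap.mul_apply,
      ContinuousLinearMap.sub_apply, ContinuousLinearMap.smul_apply,
      ContinuousLinearMap.comp_apply, map_sub, map_smul] using h0
  refine ⟨⟨algebraMap ℂ (Y →L[ℂ] Y) lam - (f ∘L g), lam⁻¹ • (1 + f ∘L (V ∘L g)), ?_, ?_⟩, rfl⟩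
  · ext y
    have key : lam • f (V (g y)) - f (g (f (V (g y)))) = f (g y) := by
      have h0 := congrArg f (hV1' (g y))
      simpa [map_sub, map_smul] using h0
    simp only [Algebra.algebraMap_eq_smul_one, ContinuousLinearMap.mul_apply,
      ContinuousLinearMap.sub_apply, ContinuousLinearMap.smul_apply,
      ContinuousLinearMap.one_apply, ContinuousLinearMap.add_apply,
      ContinuousLinearMap.comp_apply, map_add, map_smul, map_sub, smul_add, smul_sub]
    have e2 := congrArg (fun t => lam⁻¹ • t) key
    simp only [smul_sub] at e2
    rw [e2, sub_add_cancel, smul_smul, inv_mul_cancel₀ hlam, one_smul]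
  · ext y
    have key : lam • f (V (g y)) - f (V (g (f (g y)))) = f (g y) := by
      have h0 := congrArg f (hV2' (g y))
      simpa [map_sub, map_smul] using h0
    simp only [Algebra.algebraMap_eq_smul_one, ContinuousLinearMap.mul_apply,
      ContinuousLinearMap.sub_apply, ContinuousLinearMap.smul_apply,
      ContinuousLinearMap.one_apply, ContinuousLinearMap.add_apply,
      ContinuousLinearMap.comp_apply, map_add, map_smul, map_sub, smul_add, smul_sub]
    have e2 := congrArg (fun t => lam⁻¹ • t) key
    simp only [smul_sub] at e2
    simp only [smul_smul, mul_inv_cancel₀ hlam, inv_mul_cancel₀ hlam, one_smul] at e2 ⊢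
    rw [← e2]; abel

set_option linter.unusedSectionVars false

private lemma isQuasinilpotent_swap (f : X →L[ℂ] Y) (g : Y →L[ℂ] X) (hY : Nontrivial Y)
    (h : IsQuasinilpotent (g ∘L f)) : IsQuasinilpotent (f ∘L g) := by
  haveI : Nontrivial (Y →L[ℂ] Y) := by
    obtain ⟨y, hy⟩ := exists_ne (0 : Y)
    refine ⟨1, 0, fun hc => hy ?_⟩
    have := DFunLike.congr_fun hc y
    simpa using this
  have hsub : spectrum ℂ (f ∘L g) ⊆ {0} := by
    intro lam hlam
    by_contra h0
    have hlam0 : lam ≠ 0 := h0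
    have hn : lam ∉ spectrum ℂ (g ∘L f) := by
      rw [h]; exact h0
    have hu := spectrum.notMem_iff.mp hn
    have := isUnit_swap f g hlam0 hu
    exact (spectrum.notMem_iff.mpr this) hlam
  have hne : (spectrum ℂ (f ∘L g)).Nonempty := spectrum.nonempty _
  unfold IsQuasinilpotent
  obtain ⟨lam, hlam⟩ := hne
  have : lam = 0 := hsub hlam
  subst this
  exact Set.eq_singleton_iff_unique_mem.mpr ⟨hlam, fun x hx => hsub hx⟩

private lemma quasinil_pow_le (N : X →L[ℂ] X) (h : IsQuasinilpotent N) {r : NNReal}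
    (hr : 0 < r) : ∀ᶠ n : ℕ in Filter.atTop, ‖N ^ n‖₊ ≤ r ^ n := by
  have hrad : spectralRadius ℂ N = 0 := by
    unfold IsQuasinilpotent at h
    simp [spectralRadius, h]
  have hT := spectrum.pow_nnnorm_pow_one_div_tendsto_nhds_spectralRadius N
  rw [hrad] at hT
  have hpos : (0 : ENNReal) < (r : ENNReal) := by exact_mod_cast hr
  have hev : ∀ᶠ n : ℕ in Filter.atTop, (‖N ^ n‖₊ : ENNReal) ^ (1 / (n : ℝ)) < (r : ENNReal) :=
    hT.eventually_lt_const hpos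
  filter_upwards [hev, Filter.eventually_ge_atTop 1] with n hn hn1
  have hne : (n : ℝ) ≠ 0 := by positivity
  have h2 := ENNReal.rpow_le_rpow hn.le (by positivity : (0:ℝ) ≤ (n:ℝ))
  rw [← ENNReal.rpow_mul, one_div, inv_mul_cancel₀ hne, ENNReal.rpow_one,
    ENNReal.rpow_natCast, ← ENNReal.coe_pow] at h2
  exact_mod_cast h2

private lemma vanish_of_norm_le (c : X →L[ℂ] Y)
    (h : ∀ᶠ n : ℕ in Filter.atTop, ‖c‖ ≤ (1/2 : ℝ) ^ n) : c = 0 := by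
  have h0 : Filter.Tendsto (fun n : ℕ => (1/2 : ℝ) ^ n) Filter.atTop (nhds 0) :=
    tendsto_pow_atTop_nhds_zero_of_lt_one (by norm_num) (by norm_num)
  have : ‖c‖ ≤ 0 := ge_of_tendsto h0 h
  rwa [← norm_le_zero_iff]

private lemma gdrazin_unique {S B₁ B₂ : X →L[ℂ] X}
    (h₁ : IsGDrazinInv S B₁) (h₂ : IsGDrazinInv S B₂) : B₁ = B₂ := by
  obtain ⟨c1, m1, q1⟩ := h₁
  obtain ⟨c2, m2, q2⟩ := h₂
  have hc1 : Commute S B₁ := c1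
  have hc2 : Commute S B₂ := c2
  set e := S * B₁ with he
  set f := S * B₂ with hf
  have hee : e * e = e := by rw [he, mul_assoc, ← mul_assoc B₁ S B₁, m1]
  have hff : f * f = f := by rw [hf, mul_assoc, ← mul_assoc B₂ S B₂, m2]
  have hcomm_e : Commute S e := (Commute.refl S).mul_right hc1
  have hcomm_f : Commute S f := (Commute.refl S).mul_right hc2
  have hcomm_1e : Commute S (1 - e) := (Commute.one_right S).sub_right hcomm_e
  have hcomm_1f : Commute S (1 - f) := (Commute.one_right S).sub_right hcomm_f
  have h1e : (1 - e) * (1 - e) = 1 - e := by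
    rw [sub_mul, one_mul, mul_sub, mul_one, hee]; abel
  have h1f : (1 - f) * (1 - f) = 1 - f := by
    rw [sub_mul, one_mul, mul_sub, mul_one, hff]; abel
  have hN1 : S - S * S * B₁ = S * (1 - e) := by
    rw [mul_sub, mul_one, he, ← mul_assoc]
  have hN2 : S - S * S * B₂ = S * (1 - f) := by
    rw [mul_sub, mul_one, hf, ← mul_assoc]
  have epow : ∀ n : ℕ, 1 ≤ n → e ^ n = e := by
    intro n hn
    obtain ⟨k, rfl⟩ := Nat.exists_eq_add_of_le hn
    rw [add_comm]; exact IsIdempotentElem.pow_succ_eq k hee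
  have fpow : ∀ n : ℕ, 1 ≤ n → f ^ n = f := by
    intro n hn
    obtain ⟨k, rfl⟩ := Nat.exists_eq_add_of_le hn
    rw [add_comm]; exact IsIdempotentElem.pow_succ_eq k hff
  have pow1e : ∀ n : ℕ, 1 ≤ n → (1 - e) ^ n = 1 - e := by
    intro n hn
    obtain ⟨k, rfl⟩ := Nat.exists_eq_add_of_le hn
    rw [add_comm]; exact IsIdempotentElem.pow_succ_eq k h1e
  have pow1f : ∀ n : ℕ, 1 ≤ n → (1 - f) ^ n = 1 - f := by
    intro n hn
    obtain ⟨k, rfl⟩ := Nat.exists_eq_add_of_le hn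
    rw [add_comm]; exact IsIdempotentElem.pow_succ_eq k h1f
  have claim1 : ∀ n : ℕ, 1 ≤ n → (1 - e) * f = (S - S * S * B₁) ^ n * B₂ ^ n := by
    intro n hn
    calc (1 - e) * f = (1 - e) * f ^ n := by rw [fpow n hn]
      _ = (1 - e) * (S ^ n * B₂ ^ n) := by rw [hc2.mul_pow]
      _ = ((1 - e) * S ^ n) * B₂ ^ n := by rw [mul_assoc]
      _ = (S ^ n * (1 - e)) * B₂ ^ n := by rw [(hcomm_1e.symm.pow_right n).eq]
      _ = (S ^ n * (1 - e) ^ n) * B₂ ^ n := by rw [pow1e n hn]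
      _ = (S * (1 - e)) ^ n * B₂ ^ n := by rw [hcomm_1e.mul_pow]
      _ = (S - S * S * B₁) ^ n * B₂ ^ n := by rw [hN1]
  have claim2 : ∀ n : ℕ, 1 ≤ n → e * (1 - f) = B₁ ^ n * (S - S * S * B₂) ^ n := by
    intro n hn
    calc e * (1 - f) = e ^ n * (1 - f) := by rw [epow n hn]
      _ = (S ^ n * B₁ ^ n) * (1 - f) := by rw [hc1.mul_pow]
      _ = (B₁ ^ n * S ^ n) * (1 - f) := by rw [(hc1.pow_pow n n).eq]
      _ = B₁ ^ n * (S ^ n * (1 - f)) := by rw [mul_assoc]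
      _ = B₁ ^ n * (S ^ n * (1 - f) ^ n) := by rw [pow1f n hn]
      _ = B₁ ^ n * (S * (1 - f)) ^ n := by rw [hcomm_1f.mul_pow]
      _ = B₁ ^ n * (S - S * S * B₂) ^ n := by rw [hN2]
  have vanish : ∀ (N B C : X →L[ℂ] X), IsQuasinilpotent N →
      (∀ n : ℕ, 1 ≤ n → C = N ^ n * B ^ n) → C = 0 := by
    intro N B C hq hrep
    set b : NNReal := ‖B‖₊ with hb
    have hr : (0 : NNReal) < ((b + 1) * 2)⁻¹ := by positivity
    have hev := quasinil_pow_le N hq hr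
    apply vanish_of_norm_le
    filter_upwards [hev, Filter.eventually_ge_atTop 1] with n hn hn1
    rw [hrep n hn1]
    have h1 : ‖N ^ n * B ^ n‖₊ ≤ ‖N ^ n‖₊ * ‖B ^ n‖₊ := nnnorm_mul_le _ _
    have h2 : ‖B ^ n‖₊ ≤ b ^ n := nnnorm_pow_le' B (lt_of_lt_of_le one_pos hn1)
    have h3 : ‖N ^ n * B ^ n‖₊ ≤ ((b + 1) * 2)⁻¹ ^ n * b ^ n :=
      le_trans h1 (mul_le_mul' hn h2)
    have h4 : (((b + 1) * 2)⁻¹ : NNReal) ^ n * b ^ n ≤ (2⁻¹ : NNReal) ^ n := by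
      rw [← mul_pow]
      refine pow_le_pow_left₀ (by positivity) ?_ n
      have hb1 : (b + 1 : NNReal) ≠ 0 := by positivity
      calc ((b + 1) * 2)⁻¹ * b ≤ ((b + 1) * 2)⁻¹ * (b + 1) := by
            exact mul_le_mul' le_rfl (le_add_of_nonneg_right zero_le_one)
        _ = 2⁻¹ := by
            rw [mul_inv, mul_comm ((b+1):NNReal)⁻¹, mul_assoc, inv_mul_cancel₀ hb1, mul_one]
    have h5 : ‖N ^ n * B ^ n‖₊ ≤ (2⁻¹ : NNReal) ^ n := le_trans h3 h4
    calc ‖N ^ n * B ^ n‖ = ((‖N ^ n * B ^ n‖₊ : NNReal) : ℝ) := rfl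
      _ ≤ (((2⁻¹ : NNReal) ^ n : NNReal) : ℝ) := by exact_mod_cast h5
      _ = (1/2 : ℝ) ^ n := by push_cast; norm_num
  have vanish2 : ∀ (N B C : X →L[ℂ] X), IsQuasinilpotent N →
      (∀ n : ℕ, 1 ≤ n → C = B ^ n * N ^ n) → C = 0 := by
    intro N B C hq hrep
    set b : NNReal := ‖B‖₊ with hb
    have hr : (0 : NNReal) < ((b + 1) * 2)⁻¹ := by positivity
    have hev := quasinil_pow_le N hq hr
    apply vanish_of_norm_le
    filter_upwards [hev, Filter.eventually_ge_atTop 1] with n hn hn1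
    rw [hrep n hn1]
    have h1 : ‖B ^ n * N ^ n‖₊ ≤ ‖B ^ n‖₊ * ‖N ^ n‖₊ := nnnorm_mul_le _ _
    have h2 : ‖B ^ n‖₊ ≤ b ^ n := nnnorm_pow_le' B (lt_of_lt_of_le one_pos hn1)
    have h3 : ‖B ^ n * N ^ n‖₊ ≤ b ^ n * ((b + 1) * 2)⁻¹ ^ n :=
      le_trans h1 (mul_le_mul' h2 hn)
    have h4 : (b : NNReal) ^ n * ((b + 1) * 2)⁻¹ ^ n ≤ (2⁻¹ : NNReal) ^ n := by
      rw [← mul_pow]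
      refine pow_le_pow_left₀ (by positivity) ?_ n
      have hb1 : (b + 1 : NNReal) ≠ 0 := by positivity
      calc b * ((b + 1) * 2)⁻¹ ≤ (b + 1) * ((b + 1) * 2)⁻¹ := by
            exact mul_le_mul' (le_add_of_nonneg_right zero_le_one) le_rfl
        _ = 2⁻¹ := by
            rw [mul_inv, ← mul_assoc, mul_inv_cancel₀ hb1, one_mul]
    have h5 : ‖B ^ n * N ^ n‖₊ ≤ (2⁻¹ : NNReal) ^ n := le_trans h3 h4
    calc ‖B ^ n * N ^ n‖ = ((‖B ^ n * N ^ n‖₊ : NNReal) : ℝ) := rfl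
      _ ≤ (((2⁻¹ : NNReal) ^ n : NNReal) : ℝ) := by exact_mod_cast h5
      _ = (1/2 : ℝ) ^ n := by push_cast; norm_num
  have hz1 : (1 - e) * f = 0 := vanish _ _ _ q1 claim1
  have hz2 : e * (1 - f) = 0 := vanish2 _ _ _ q2 claim2
  have hef1 : e * f = f := by
    have : f - e * f = 0 := by rw [← hz1, sub_mul, one_mul]
    have := sub_eq_zero.mp this; exact this.symm
  have hef2 : e * f = e := by
    have : e - e * f = 0 := by rw [← hz2, mul_sub, mul_one]
    exact (sub_eq_zero.mp this).symm
  have hef : e = f := by rw [← hef2, hef1]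
  calc B₁ = B₁ * S * B₁ := m1.symm
    _ = B₁ * e := by rw [mul_assoc, ← he]
    _ = B₁ * f := by rw [hef]
    _ = B₁ * S * B₂ := by rw [hf, mul_assoc]
    _ = S * B₁ * B₂ := by rw [← c1]
    _ = e * B₂ := by rw [← he]
    _ = f * B₂ := by rw [hef]
    _ = B₂ * S * B₂ := by rw [hf, ← c2]
    _ = B₂ := m2

private lemma fix_of_mem_range {P : X →L[ℂ] X} (h : P * P = P) {y : X}
    (hy : y ∈ LinearMap.range (P : X →ₗ[ℂ] X)) : P y = y := by
  obtain ⟨z, rfl⟩ := hy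
  have h0 := DFunLike.congr_fun h z
  simpa using h0

theorem stmt13
    (W : Y →L[ℂ] X) (hW : W ≠ 0)
    (A Adw : X →L[ℂ] Y) (hAdw : IsWgDrazinInv W A Adw)
    (WAd : X →L[ℂ] X) (hWAd : IsGDrazinInv (W ∘L A) WAd)
    (AWd : Y →L[ℂ] Y) (hAWd : IsGDrazinInv (A ∘L W) AWd)
    (Ace : X →L[ℂ] Y) (hAce : IsWCoreEPInv W A WAd AWd Ace)
    (Aot : X →L[ℂ] Y) (hAot : Aot = Ace ∘L W ∘L Ace ∘L W ∘L A) :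
    (∃ G : Y →L[ℂ] Y, IsGroupInv ((A ∘L W) * (A ∘L W) * (A ∘L W) * AWd) G) ∧
    (∃ C : Y →L[ℂ] Y, IsCoreInv ((A ∘L W) * (A ∘L W) * (A ∘L W) * AWd) C) ∧
    ∀ C : Y →L[ℂ] Y, IsCoreInv ((A ∘L W) * (A ∘L W) * (A ∘L W) * AWd) C →
      Aot = C ∘L A ∘L W ∘L Ace ∘L W ∘L A := by
  -- basic nontriviality
  have hY : Nontrivial Y := by
    by_contra hcon
    rw [not_nontrivial_iff_subsingleton] at hcon
    exact hW (by ext y; rw [Subsingleton.elim y 0, map_zero]; rfl)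
  -- pointwise versions of the gDrazin axioms for AW
  have r1 : ∀ y : Y, A (W (AWd y)) = AWd (A (W y)) := by
    intro y
    have h0 := DFunLike.congr_fun hAWd.1 y
    simpa using h0
  have hdds : AWd * (AWd * (A ∘L W)) = AWd := by
    rw [← hAWd.1, ← mul_assoc]; exact hAWd.2.1
  have r2 : ∀ y : Y, AWd (AWd (A (W y))) = AWd y := by
    intro y
    have h0 := DFunLike.congr_fun hdds y
    simpa using h0
  set T : Y →L[ℂ] Y := (A ∘L W) * (A ∘L W) * (A ∘L W) * AWd with hTdef
  set Gi : Y →L[ℂ] Y := AWd * AWd with hGdef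
  set P : Y →L[ℂ] Y := (A ∘L W) * AWd with hPdef
  have hTG : T * Gi = P := by
    ext y; simp only [hTdef, hGdef, hPdef, ContinuousLinearMap.mul_apply,
      ContinuousLinearMap.comp_apply]
    simp only [r1, r2]
  have hGT : Gi * T = P := by
    ext y; simp only [hTdef, hGdef, hPdef, ContinuousLinearMap.mul_apply,
      ContinuousLinearMap.comp_apply]
    simp only [r1, r2]
  have hPG : P * Gi = Gi := by
    ext y; simp only [hGdef, hPdef, ContinuousLinearMap.mul_apply,
      ContinuousLinearMap.comp_apply]
    simp only [r1, r2]
  have hPT : P * T = T := by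
    ext y; simp only [hTdef, hPdef, ContinuousLinearMap.mul_apply,
      ContinuousLinearMap.comp_apply]
    simp only [r1, r2]
  have hPd : ∀ y : Y, P (AWd y) = AWd y := by
    intro y; simp only [hPdef, ContinuousLinearMap.mul_apply, ContinuousLinearMap.comp_apply]
    simp only [r1, r2]
  -- AWd values are in the range of T
  have hdT : ∀ v : Y, AWd v ∈ LinearMap.range (T : Y →ₗ[ℂ] Y) := by
    intro v
    refine ⟨Gi (AWd v), ?_⟩
    have h0 := DFunLike.congr_fun hTG (AWd v)
    simp only [ContinuousLinearMap.mul_apply, ContinuousLinearMap.coe_coe] at h0 ⊢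
    rw [h0]; exact hPd v
  have hfixT : ∀ y : Y, y ∈ LinearMap.range (T : Y →ₗ[ℂ] Y) → P y = y := by
    rintro y ⟨z, rfl⟩
    have h0 := DFunLike.congr_fun hPT z
    simpa using h0
  have hmemT : ∀ y : Y, P y = y → y ∈ LinearMap.range (T : Y →ₗ[ℂ] Y) := by
    intro y hy
    refine ⟨Gi y, ?_⟩
    have h0 := DFunLike.congr_fun hTG y
    simp only [ContinuousLinearMap.mul_apply, ContinuousLinearMap.coe_coe] at h0 ⊢
    rw [h0]; exact hy
  -- the group inverse
  have hgroup : IsGroupInv T Gi := by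
    refine ⟨by rw [hTG, hGT], ?_, ?_⟩
    · rw [hGT, hPG]
    · rw [hTG, hPT]
  refine ⟨⟨Gi, hgroup⟩, ?_, ?_⟩
  · -- existence of core inverse
    have hclosed : IsClosed ((LinearMap.range (T : Y →ₗ[ℂ] Y) : Submodule ℂ Y) : Set Y) := by
      have hset : ((LinearMap.range (T : Y →ₗ[ℂ] Y) : Submodule ℂ Y) : Set Y) = {y | P y = y} := by
        ext y
        exact ⟨fun hy => hfixT y hy, fun hy => hmemT y hy⟩
      rw [hset]
      exact isClosed_eq P.continuous continuous_id
    haveI : CompleteSpace (LinearMap.range (T : Y →ₗ[ℂ] Y) : Submodule ℂ Y) := hclosed.completeSpace_coe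
    set K : Submodule ℂ Y := LinearMap.range (T : Y →ₗ[ℂ] Y) with hKdef
    set Pi : Y →L[ℂ] Y := K.subtypeL ∘L K.orthogonalProjection with hPidef
    have hPimem : ∀ y : Y, Pi y ∈ K := fun y => (K.orthogonalProjection y).2
    have hPifix : ∀ y ∈ K, Pi y = y := by
      intro y hy
      exact Submodule.starProjection_eq_self_iff.mpr hy
    have hPiidem : Pi * Pi = Pi := by
      ext y
      exact hPifix _ (hPimem y)
    have hPiadj : ContinuousLinearMap.adjoint Pi = Pi :=
      (isSelfAdjoint_starProjection K)
    have hPirange : LinearMap.range (Pi : Y →ₗ[ℂ] Y) = K := by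
      apply le_antisymm
      · rintro y ⟨z, rfl⟩; exact hPimem z
      · intro y hy; exact ⟨y, hPifix y hy⟩
    have hPPi : ∀ y : Y, P (Pi y) = Pi y := fun y => hfixT _ (hPimem y)
    refine ⟨Gi ∘L Pi, ⟨⟨?_, ?_, ?_⟩, ?_⟩⟩
    · have hTC : T * (Gi ∘L Pi) = Pi := by
        ext y
        have h0 := DFunLike.congr_fun hTG (Pi y)
        simp only [ContinuousLinearMap.mul_apply, ContinuousLinearMap.comp_apply] at h0 ⊢
        rw [h0]; exact hPPi y
      rw [hTC]; exact hPiidem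
    · have hTC : T * (Gi ∘L Pi) = Pi := by
        ext y
        have h0 := DFunLike.congr_fun hTG (Pi y)
        simp only [ContinuousLinearMap.mul_apply, ContinuousLinearMap.comp_apply] at h0 ⊢
        rw [h0]; exact hPPi y
      rw [hTC]; exact hPiadj
    · have hTC : T * (Gi ∘L Pi) = Pi := by
        ext y
        have h0 := DFunLike.congr_fun hTG (Pi y)
        simp only [ContinuousLinearMap.mul_apply, ContinuousLinearMap.comp_apply] at h0 ⊢
        rw [h0]; exact hPPi y
      rw [hTC, hPirange]
    · rintro y ⟨z, rfl⟩
      have : (Gi ∘L Pi) z = AWd (AWd (Pi z)) := by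
        simp [hGdef, ContinuousLinearMap.mul_apply]
      rw [ContinuousLinearMap.coe_coe, this]
      exact hdT _
  · -- uniqueness formula
    obtain ⟨wc, wm, wq⟩ := hAdw
    have wc' : ∀ x : X, A (W (Adw x)) = Adw (W (A x)) := by
      intro x; have h0 := DFunLike.congr_fun wc x; simpa using h0
    have hWAdw : IsGDrazinInv (W ∘L A) (W ∘L Adw) := by
      refine ⟨?_, ?_, ?_⟩
      · ext x
        simp only [ContinuousLinearMap.mul_apply, ContinuousLinearMap.comp_apply]
        simp only [wc']
      · ext x
        simp only [ContinuousLinearMap.mul_apply, ContinuousLinearMap.comp_apply]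
        have h0 := DFunLike.congr_fun wm x
        simp only [ContinuousLinearMap.comp_apply] at h0
        exact congrArg W h0
      · have heq : (W ∘L A) - (W ∘L A) * (W ∘L A) * (W ∘L Adw)
            = W ∘L (A - A ∘L W ∘L Adw ∘L W ∘L A) := by
          ext x
          simp only [ContinuousLinearMap.mul_apply, ContinuousLinearMap.comp_apply,
            ContinuousLinearMap.sub_apply, map_sub]
          simp only [wc']
        rw [heq]; exact wq
    have hAdwW : IsGDrazinInv (A ∘L W) (Adw ∘L W) := by
      refine ⟨?_, ?_, ?_⟩
      · ext y
        simp only [ContinuousLinearMap.mul_apply, ContinuousLinearMap.comp_apply]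
        simp only [wc']
      · ext y
        simp only [ContinuousLinearMap.mul_apply, ContinuousLinearMap.comp_apply]
        have h0 := DFunLike.congr_fun wm (W y)
        simp only [ContinuousLinearMap.comp_apply] at h0
        exact h0
      · have heq : (A ∘L W) - (A ∘L W) * (A ∘L W) * (Adw ∘L W)
            = (A - A ∘L W ∘L Adw ∘L W ∘L A) ∘L W := by
          ext y
          simp only [ContinuousLinearMap.mul_apply, ContinuousLinearMap.comp_apply,
            ContinuousLinearMap.sub_apply, map_sub]
          simp only [wc']
        rw [heq]
        exact isQuasinilpotent_swap _ W hY wq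
    have hAWd_eq : AWd = Adw ∘L W := gdrazin_unique hAWd hAdwW
    have hWAd_eq : WAd = W ∘L Adw := gdrazin_unique hWAd hWAdw
    obtain ⟨⟨pi2, pia, pir⟩, hrange⟩ := hAce
    have hQfix : ∀ v' ∈ LinearMap.range (WAd : X →ₗ[ℂ] X), (W ∘L A ∘L W ∘L Ace) v' = v' := by
      intro v' hv'
      apply fix_of_mem_range pi2
      rw [pir]; exact hv'
    have hWAce : ∀ u : X, W (Ace u) ∈ LinearMap.range (WAd : X →ₗ[ℂ] X) := by
      intro u
      obtain ⟨z, hz⟩ := hrange ⟨u, rfl⟩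
      simp only [ContinuousLinearMap.coe_coe] at hz
      rw [hWAd_eq]
      refine ⟨W z, ?_⟩
      rw [← hz, hAWd_eq]
      simp only [ContinuousLinearMap.coe_coe, ContinuousLinearMap.comp_apply]
    have key : ∀ u : X, Ace (W (Ace u)) = AWd (Ace u) := by
      intro u
      obtain ⟨z, hz⟩ := hrange ⟨u, rfl⟩
      simp only [ContinuousLinearMap.coe_coe] at hz
      set v : Y := AWd (Ace u) - Ace (W (Ace u)) with hv
      have hvmem : v ∈ LinearMap.range (AWd : Y →ₗ[ℂ] Y) := by
        apply Submodule.sub_mem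
        · exact ⟨Ace u, rfl⟩
        · exact hrange ⟨W (Ace u), rfl⟩
      have hWAW_Ad : W (A (W (AWd (Ace u)))) = W (Ace u) := by
        rw [← hz]
        exact congrArg W (by simp only [r1, r2])
      have hWAW_Ace : W (A (W (Ace (W (Ace u))))) = W (Ace u) := by
        have h0 := hQfix (W (Ace u)) (hWAce u)
        simpa [ContinuousLinearMap.comp_apply] using h0
      have hWAWv : W (A (W v)) = 0 := by
        rw [hv]
        simp only [map_sub]
        rw [hWAW_Ad, hWAW_Ace, sub_self]
      have hv0 : v = 0 := by
        obtain ⟨z0, hz0⟩ := hvmem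
        simp only [ContinuousLinearMap.coe_coe] at hz0
        have hv1 : AWd (A (W v)) = v := by
          rw [← hz0]
          simp only [r1, r2]
        have hv2 : v = AWd (AWd (A (W (A (W v))))) := by
          conv_lhs => rw [← hv1, ← hv1]
          rw [r1]
        rw [hv2, hWAWv]
        simp
      have h0 := sub_eq_zero.mp hv0
      exact h0.symm
    intro C hC
    obtain ⟨⟨hCi, hCa, hCr⟩, hCs⟩ := hC
    rw [hAot]
    ext x
    simp only [ContinuousLinearMap.comp_apply]
    set u : X := W (A x) with hu
    obtain ⟨z, hz⟩ := hrange ⟨u, rfl⟩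
    simp only [ContinuousLinearMap.coe_coe] at hz
    have hMrep : T (Gi z) = A (W (Ace u)) := by
      rw [← hz]
      simp only [hTdef, hGdef, ContinuousLinearMap.mul_apply,
        ContinuousLinearMap.comp_apply]
      simp only [r1, r2]
    have hMmem : A (W (Ace u)) ∈ LinearMap.range (T : Y →ₗ[ℂ] Y) := ⟨Gi z, hMrep⟩
    have hTCfix : (T * C) (A (W (Ace u))) = A (W (Ace u)) := by
      apply fix_of_mem_range hCi
      rw [hCr]; exact hMmem
    have hCrep : ∀ y : Y, C y = Gi (T (C y)) := by
      intro y
      have h1 : P (C y) = C y := hfixT _ (hCs ⟨y, rfl⟩)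
      have h2 := DFunLike.congr_fun hGT (C y)
      simp only [ContinuousLinearMap.mul_apply] at h2
      exact (h2.trans h1).symm
    have hTC' : T (C (A (W (Ace u)))) = A (W (Ace u)) := by
      have := hTCfix
      simpa [ContinuousLinearMap.mul_apply] using this
    rw [hCrep (A (W (Ace u))), hTC', key u, ← hz]
    simp only [hGdef, ContinuousLinearMap.mul_apply]
    simp only [r1, r2]
end

section
/- Let A ∈ B(X) be generalized Drazin invertible. Then: (i) AA^ⓓA is group invertible and A^⊗ = (AA^ⓓA)^# = (P_{R(A^d)}A)^#; (ii) A² is generalized Drazin invertible and A^⊗ = (A²)^ⓓ A; (iii) A^⊗ = (A^d)² P_{R(A^d)} A, where P_{R(A^d)} is the orthogonal projection onto R(A^d). -/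
open ContinuousLinearMap

variable {X Y : Type*}
  [NormedAddCommGroup X] [InnerProductSpace ℂ X] [CompleteSpace X]
  [NormedAddCommGroup Y] [InnerProductSpace ℂ Y] [CompleteSpace Y]

section Helper

open Filter Topology

set_option linter.unusedSectionVars false

lemma quasi_norm_pow {N : X →L[ℂ] X} (hN : IsQuasinilpotent N) {ε : ℝ} (hε : 0 < ε) :
    ∀ᶠ n : ℕ in atTop, ‖N ^ n‖ ≤ ε ^ n := by
  have hsr : spectralRadius ℂ N = 0 := by
    simp [spectralRadius, hN]
    exact fun i hi => by rw [hN] at hi; exact hi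
  have h := spectrum.pow_norm_pow_one_div_tendsto_nhds_spectralRadius N
  rw [hsr] at h
  have h2 : ∀ᶠ n : ℕ in atTop, ENNReal.ofReal (‖N ^ n‖ ^ (1 / (n : ℝ))) < ENNReal.ofReal ε :=
    h.eventually (gt_mem_nhds (by simpa using hε))
  filter_upwards [h2, Filter.eventually_ge_atTop 1] with n hn hn1
  have hx : ‖N ^ n‖ ^ (1 / (n : ℝ)) < ε := (ENNReal.ofReal_lt_ofReal_iff hε).mp hn
  have hb : (0 : ℝ) ≤ ‖N ^ n‖ ^ (1 / (n : ℝ)) := Real.rpow_nonneg (norm_nonneg _) _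
  have hne : (n : ℝ) ≠ 0 := Nat.cast_ne_zero.mpr (by omega)
  calc ‖N ^ n‖ = (‖N ^ n‖ ^ (1 / (n : ℝ))) ^ n := by
        rw [← Real.rpow_natCast (‖N ^ n‖ ^ (1 / (n : ℝ))) n, ← Real.rpow_mul (norm_nonneg _),
          one_div_mul_cancel hne, Real.rpow_one]
    _ ≤ ε ^ n := pow_le_pow_left₀ hb hx.le n

private lemma powIdem {M : Type*} [Monoid M] {R : M} (hR : R * R = R) (n : ℕ) :
    R ^ (n + 1) = R := by
  induction n with
  | zero => rw [pow_one]
  | succ k ih => rw [pow_succ, ih, hR]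

/-- the norm-zero trick: if `‖v‖ ≤ C * (1/2)^n` eventually, then `v = 0`. -/
private lemma vanish {v : X} {C : ℝ}
    (h : ∀ᶠ n : ℕ in atTop, ‖v‖ ≤ C * (1 / 2) ^ n) : v = 0 := by
  have hlim : Tendsto (fun n : ℕ => C * (1 / 2 : ℝ) ^ n) atTop (𝓝 0) := by
    simpa using (tendsto_pow_atTop_nhds_zero_of_lt_one (r := (1/2 : ℝ)) (by norm_num)
      (by norm_num)).const_mul C
  have := ge_of_tendsto hlim h
  exact norm_le_zero_iff.mp this

lemma gdrazin_unique_s14 (T B1 B2 : X →L[ℂ] X) (h1 : IsGDrazinInv T B1) (h2 : IsGDrazinInv T B2) :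
    B1 = B2 := by
  obtain ⟨c1, i1, q1⟩ := h1
  obtain ⟨c2, i2, q2⟩ := h2
  -- idempotents
  have idem1 : (T * B1) * (T * B1) = T * B1 := by
    rw [mul_assoc, ← mul_assoc B1 T B1, i1]
  have idem2 : (T * B2) * (T * B2) = T * B2 := by
    rw [mul_assoc, ← mul_assoc B2 T B2, i2]
  -- spectral idempotent complements
  set E1 : X →L[ℂ] X := 1 - T * B1 with hE1
  set E2 : X →L[ℂ] X := 1 - T * B2 with hE2
  set N1 : X →L[ℂ] X := T - T * T * B1 with hN1
  set N2 : X →L[ℂ] X := T - T * T * B2 with hN2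
  have hTE1 : T * E1 = N1 := by rw [hE1, hN1, mul_sub, mul_one, mul_assoc]
  have hTE2 : T * E2 = N2 := by rw [hE2, hN2, mul_sub, mul_one, mul_assoc]
  have hE1idem : E1 * E1 = E1 := by
    rw [hE1]; simp only [sub_mul, mul_sub, one_mul, mul_one, idem1]; abel
  have hE2idem : E2 * E2 = E2 := by
    rw [hE2]; simp only [sub_mul, mul_sub, one_mul, mul_one, idem2]; abel
  have hc1 : Commute T B1 := c1
  have hc2 : Commute T B2 := c2
  have hcommTE1 : Commute T E1 := by
    rw [hE1]; exact (Commute.one_right T).sub_right ((Commute.refl T).mul_right hc1)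
  have hcommTE2 : Commute T E2 := by
    rw [hE2]; exact (Commute.one_right T).sub_right ((Commute.refl T).mul_right hc2)
  -- T^n * E = N^n for n ≥ 1
  have hpow1 : ∀ n : ℕ, T ^ (n + 1) * E1 = N1 ^ (n + 1) := by
    intro n
    rw [← hTE1, hcommTE1.mul_pow, powIdem hE1idem]
  have hpow2 : ∀ n : ℕ, T ^ (n + 1) * E2 = N2 ^ (n + 1) := by
    intro n
    rw [← hTE2, hcommTE2.mul_pow, powIdem hE2idem]
  -- claim (b): `T*B2` kills the range of `E1`
  have hkill : ∀ x : X, (T * B2) (E1 x) = 0 := by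
    intro x
    set ε : ℝ := 1 / (2 * (‖B2‖ + 1)) with hεdef
    have hεpos : 0 < ε := by positivity
    have hεle : ‖B2‖ * ε ≤ 1 / 2 := by
      rw [hεdef, mul_one_div, div_le_div_iff₀ (by positivity) (by norm_num)]
      nlinarith [norm_nonneg B2]
    apply vanish (C := ‖x‖)
    filter_upwards [quasi_norm_pow q1 hεpos, eventually_ge_atTop 1] with n hn hn1
    obtain ⟨m, rfl⟩ : ∃ m, n = m + 1 := ⟨n - 1, by omega⟩
    have eop : (T * B2) * E1 = B2 ^ (m + 1) * N1 ^ (m + 1) := by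
      calc (T * B2) * E1 = (T * B2) ^ (m + 1) * E1 := by rw [powIdem idem2]
        _ = T ^ (m + 1) * B2 ^ (m + 1) * E1 := by rw [hc2.mul_pow]
        _ = B2 ^ (m + 1) * T ^ (m + 1) * E1 := by rw [(hc2.pow_pow (m + 1) (m + 1)).eq]
        _ = B2 ^ (m + 1) * (T ^ (m + 1) * E1) := by rw [mul_assoc]
        _ = B2 ^ (m + 1) * N1 ^ (m + 1) := by rw [hpow1]
    have epe : (T * B2) (E1 x) = (B2 ^ (m + 1)) ((N1 ^ (m + 1)) x) := by
      calc (T * B2) (E1 x) = ((T * B2) * E1) x := rfl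
        _ = (B2 ^ (m + 1) * N1 ^ (m + 1)) x := by rw [eop]
        _ = (B2 ^ (m + 1)) ((N1 ^ (m + 1)) x) := rfl
    rw [epe]
    calc ‖(B2 ^ (m + 1)) ((N1 ^ (m + 1)) x)‖
        ≤ ‖B2 ^ (m + 1)‖ * ‖(N1 ^ (m + 1)) x‖ := le_opNorm _ _
      _ ≤ ‖B2‖ ^ (m + 1) * (‖N1 ^ (m + 1)‖ * ‖x‖) := by
          gcongr ?_ * ?_
          · exact norm_pow_le' _ (Nat.succ_pos m)
          · exact le_opNorm _ _
      _ ≤ ‖B2‖ ^ (m + 1) * (ε ^ (m + 1) * ‖x‖) := by gcongr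
      _ = (‖B2‖ * ε) ^ (m + 1) * ‖x‖ := by ring
      _ ≤ (1 / 2) ^ (m + 1) * ‖x‖ := by gcongr
      _ = ‖x‖ * (1 / 2) ^ (m + 1) := by ring
  -- claim (a): `E2` kills the range of `T*B1`
  have hfix : ∀ x : X, E2 ((T * B1) x) = 0 := by
    intro x
    set w : X := (T * B1) x with hw
    set ε : ℝ := 1 / (2 * (‖B1‖ + 1)) with hεdef
    have hεpos : 0 < ε := by positivity
    have hεle : ‖B1‖ * ε ≤ 1 / 2 := by
      rw [hεdef, mul_one_div, div_le_div_iff₀ (by positivity) (by norm_num)]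
      nlinarith [norm_nonneg B1]
    apply vanish (C := ‖w‖)
    filter_upwards [quasi_norm_pow q2 hεpos, eventually_ge_atTop 1] with n hn hn1
    obtain ⟨m, rfl⟩ : ∃ m, n = m + 1 := ⟨n - 1, by omega⟩
    have eop : E2 * (T * B1) = N2 ^ (m + 1) * (B1 ^ (m + 1) * (T * B1)) := by
      calc E2 * (T * B1) = E2 * (T * B1) ^ ((m + 1) + 1) := by rw [powIdem idem1 (m + 1)]
        _ = E2 * ((T * B1) ^ (m + 1) * (T * B1)) := by rw [pow_succ]
        _ = E2 * (T ^ (m + 1) * B1 ^ (m + 1) * (T * B1)) := by rw [hc1.mul_pow]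
        _ = (E2 * T ^ (m + 1)) * (B1 ^ (m + 1) * (T * B1)) := by simp only [mul_assoc]
        _ = (T ^ (m + 1) * E2) * (B1 ^ (m + 1) * (T * B1)) := by
            rw [(hcommTE2.symm.pow_right (m + 1)).eq]
        _ = N2 ^ (m + 1) * (B1 ^ (m + 1) * (T * B1)) := by rw [hpow2]
    have epe : E2 w = (N2 ^ (m + 1)) ((B1 ^ (m + 1)) w) := by
      calc E2 w = (E2 * (T * B1)) x := rfl
        _ = (N2 ^ (m + 1) * (B1 ^ (m + 1) * (T * B1))) x := by rw [eop]
        _ = (N2 ^ (m + 1)) ((B1 ^ (m + 1)) w) := rfl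
    rw [epe]
    calc ‖(N2 ^ (m + 1)) ((B1 ^ (m + 1)) w)‖
        ≤ ‖N2 ^ (m + 1)‖ * ‖(B1 ^ (m + 1)) w‖ := le_opNorm _ _
      _ ≤ ε ^ (m + 1) * (‖B1‖ ^ (m + 1) * ‖w‖) := by
          have hB : ‖(B1 ^ (m + 1)) w‖ ≤ ‖B1‖ ^ (m + 1) * ‖w‖ :=
            le_trans (le_opNorm _ _)
              (mul_le_mul_of_nonneg_right (norm_pow_le' _ (Nat.succ_pos m)) (norm_nonneg _))
          gcongr
      _ = (‖B1‖ * ε) ^ (m + 1) * ‖w‖ := by ring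
      _ ≤ (1 / 2) ^ (m + 1) * ‖w‖ := by gcongr
      _ = ‖w‖ * (1 / 2) ^ (m + 1) := by ring
  -- conclude T*B1 = T*B2
  have hTB : T * B1 = T * B2 := by
    ext x
    have hx : (T * B1) x + E1 x = x := by simp [hE1]
    have h1 : (T * B2) ((T * B1) x) = (T * B1) x := by
      have h0 := hfix x
      rw [hE2] at h0
      simp only [ContinuousLinearMap.sub_apply, ContinuousLinearMap.one_apply] at h0
      exact (sub_eq_zero.mp h0).symm
    have h2 : (T * B2) x = (T * B2) ((T * B1) x) + (T * B2) (E1 x) := by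
      rw [← map_add, hx]
    show (T * B1) x = (T * B2) x
    rw [h2, h1, hkill x, add_zero]
  calc B1 = B1 * (T * B1) := by rw [← mul_assoc, i1]
    _ = B1 * (T * B2) := by rw [hTB]
    _ = T * B1 * B2 := by rw [← mul_assoc, ← c1]
    _ = T * B2 * B2 := by rw [hTB]
    _ = B2 := by rw [c2, i2]

lemma orthoProj_unique {P Q : X →L[ℂ] X} {S : Submodule ℂ X}
    (hP : IsOrthoProjOnto P S) (hQ : IsOrthoProjOnto Q S) : P = Q := by
  obtain ⟨hP2, hPa, hPr⟩ := hP
  obtain ⟨hQ2, hQa, hQr⟩ := hQ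
  have hfix : ∀ (R : X →L[ℂ] X), R * R = R → ∀ x ∈ LinearMap.range (R : X →ₗ[ℂ] X), R x = x := by
    rintro R hR x hx
    obtain ⟨y, rfl⟩ := LinearMap.mem_range.mp hx
    have := DFunLike.congr_fun hR y
    simpa [ContinuousLinearMap.mul_apply] using this
  have hPQ : P * Q = Q := by
    ext x
    simp only [ContinuousLinearMap.mul_apply]
    exact hfix P hP2 (Q x) (by rw [hPr, ← hQr]; exact LinearMap.mem_range.mpr ⟨x, rfl⟩)
  have hQP : Q * P = P := by
    ext x
    simp only [ContinuousLinearMap.mul_apply]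
    exact hfix Q hQ2 (P x) (by rw [hQr, ← hPr]; exact LinearMap.mem_range.mpr ⟨x, rfl⟩)
  calc P = ContinuousLinearMap.adjoint P := hPa.symm
    _ = ContinuousLinearMap.adjoint (Q * P) := by rw [hQP]
    _ = ContinuousLinearMap.adjoint P * ContinuousLinearMap.adjoint Q := by
        rw [ContinuousLinearMap.mul_def, ContinuousLinearMap.adjoint_comp,
          ← ContinuousLinearMap.mul_def]
    _ = P * Q := by rw [hPa, hQa]
    _ = Q := hPQ

lemma quasi_sq {N : X →L[ℂ] X} (hN : IsQuasinilpotent N) : IsQuasinilpotent (N * N) := by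
  unfold IsQuasinilpotent at *
  apply Set.eq_singleton_iff_unique_mem.mpr
  constructor
  · -- 0 ∈ spectrum (N*N)
    by_contra h
    have hu : IsUnit (N * N) := (spectrum.zero_notMem_iff ℂ).mp h
    have hN0 : (0 : ℂ) ∈ spectrum ℂ N := by rw [hN]; rfl
    refine (spectrum.zero_notMem_iff ℂ).mpr ?_ hN0
    obtain ⟨u, hu⟩ := hu
    have hcomm : Commute N (↑u : X →L[ℂ] X) := by rw [hu]; exact (Commute.refl N).mul_right (Commute.refl N)
    have hcomm' : Commute N (↑u⁻¹ : X →L[ℂ] X) := hcomm.units_inv_right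
    refine isUnit_iff_exists.mpr ⟨N * ↑u⁻¹, ?_, ?_⟩
    · calc N * (N * ↑u⁻¹) = (N * N) * ↑u⁻¹ := by rw [mul_assoc]
        _ = 1 := by rw [← hu]; exact u.mul_inv
    · calc (N * ↑u⁻¹) * N = N * N * ↑u⁻¹ := by rw [mul_assoc, ← hcomm'.eq, ← mul_assoc]
        _ = 1 := by rw [← hu]; exact u.mul_inv
  · intro lam hlam
    by_contra hne
    obtain ⟨mu, hmu⟩ := IsAlgClosed.exists_pow_nat_eq lam (n := 2) (by norm_num)
    have hmune : mu ≠ 0 := by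
      intro h; apply hne; rw [← hmu, h]; ring
    have h1 : IsUnit (algebraMap ℂ (X →L[ℂ] X) mu - N) := by
      apply spectrum.notMem_iff.mp
      rw [hN]; simpa using hmune
    have h2 : IsUnit (algebraMap ℂ (X →L[ℂ] X) (-mu) - N) := by
      apply spectrum.notMem_iff.mp
      rw [hN]; simpa using hmune
    apply spectrum.notMem_iff.mpr ?_ hlam
    have hc : algebraMap ℂ (X →L[ℂ] X) mu * N = N * algebraMap ℂ (X →L[ℂ] X) mu :=
      Algebra.commutes mu N
    have key : algebraMap ℂ (X →L[ℂ] X) lam - N * N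
        = -((algebraMap ℂ (X →L[ℂ] X) mu - N) * (algebraMap ℂ (X →L[ℂ] X) (-mu) - N)) := by
      have e1 : (algebraMap ℂ (X →L[ℂ] X) mu - N) * (algebraMap ℂ (X →L[ℂ] X) (-mu) - N)
          = -(algebraMap ℂ (X →L[ℂ] X) mu * algebraMap ℂ (X →L[ℂ] X) mu)
            - algebraMap ℂ (X →L[ℂ] X) mu * N + N * algebraMap ℂ (X →L[ℂ] X) mu + N * N := by
        rw [map_neg]; noncomm_ring
      rw [e1, hc, ← map_mul]
      have : mu * mu = lam := by rw [← hmu]; ring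
      rw [this]; noncomm_ring
    rw [key]
    exact (h1.mul h2).neg

lemma groupInv_unique {T G1 G2 : X →L[ℂ] X}
    (h1 : IsGroupInv T G1) (h2 : IsGroupInv T G2) : G1 = G2 := by
  obtain ⟨c1, i1, o1⟩ := h1
  obtain ⟨c2, i2, o2⟩ := h2
  have e1 : G1 = G1 * T * G2 := by
    calc G1 = G1 * T * G1 := i1.symm
      _ = G1 * G1 * T := by rw [mul_assoc, c1, ← mul_assoc]
      _ = G1 * G1 * (T * G2 * T) := by rw [o2]
      _ = G1 * (G1 * T) * (G2 * T) := by simp only [mul_assoc]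
      _ = G1 * (T * G1) * (G2 * T) := by rw [c1]
      _ = (G1 * T * G1) * (G2 * T) := by simp only [mul_assoc]
      _ = G1 * (G2 * T) := by rw [i1]
      _ = G1 * (T * G2) := by rw [c2]
      _ = G1 * T * G2 := by rw [mul_assoc]
  have e2 : G2 = G1 * T * G2 := by
    calc G2 = G2 * T * G2 := i2.symm
      _ = T * G2 * G2 := by rw [← c2]
      _ = (T * G1 * T) * G2 * G2 := by rw [o1]
      _ = T * G1 * (T * G2 * G2) := by simp only [mul_assoc]
      _ = T * G1 * (G2 * T * G2) := by rw [c2]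
      _ = T * G1 * G2 := by rw [i2]
      _ = G1 * T * G2 := by rw [← c1]
  rw [e1, ← e2]

end Helper

theorem stmt14
    (A Ad : X →L[ℂ] X) (hAd : IsGDrazinInv A Ad)
    (Ace : X →L[ℂ] X) (hAce : IsCoreEPInv A Ad Ace)
    (Aot : X →L[ℂ] X) (hAot : Aot = Ace * Ace * A)
    (P : X →L[ℂ] X) (hP : IsOrthoProjOnto P (LinearMap.range (Ad : X →ₗ[ℂ] X))) :
    (∃ G : X →L[ℂ] X, IsGroupInv (A * Ace * A) G) ∧
    (∀ G : X →L[ℂ] X, IsGroupInv (A * Ace * A) G → Aot = G) ∧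
    (∃ G' : X →L[ℂ] X, IsGroupInv (P * A) G') ∧
    (∀ G' : X →L[ℂ] X, IsGroupInv (P * A) G' → Aot = G') ∧
    (∃ D C : X →L[ℂ] X, IsGDrazinInv (A * A) D ∧ IsCoreEPInv (A * A) D C) ∧
    (∀ D C : X →L[ℂ] X, IsGDrazinInv (A * A) D → IsCoreEPInv (A * A) D C → Aot = C * A) ∧
    Aot = Ad * Ad * P * A := by
  obtain ⟨hc, hi, hq⟩ := hAd
  obtain ⟨hproj, hrng⟩ := hAce
  -- the orthogonal projection P coincides with A * Ace
  have hPQ : P = A * Ace := orthoProj_unique hP hproj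
  have hPidem : P * P = P := hP.1
  have hPadj : ContinuousLinearMap.adjoint P = P := hP.2.1
  have hPrange : LinearMap.range (P : X →ₗ[ℂ] X) = LinearMap.range (Ad : X →ₗ[ℂ] X) := hP.2.2
  -- pointwise fixing lemmas
  have hAdA_fix : ∀ x ∈ LinearMap.range (Ad : X →ₗ[ℂ] X), Ad (A x) = x := by
    rintro x hx
    obtain ⟨y, rfl⟩ := LinearMap.mem_range.mp hx
    have := DFunLike.congr_fun hi y
    simpa [ContinuousLinearMap.mul_apply] using this
  have hAAd_fix : ∀ x ∈ LinearMap.range (Ad : X →ₗ[ℂ] X), A (Ad x) = x := by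
    rintro x hx
    obtain ⟨y, rfl⟩ := LinearMap.mem_range.mp hx
    have h1 : A * Ad * Ad = Ad := by rw [hc, hi]
    have := DFunLike.congr_fun h1 y
    simpa [ContinuousLinearMap.mul_apply] using this
  have hPfix : ∀ x ∈ LinearMap.range (Ad : X →ₗ[ℂ] X), P x = x := by
    rintro x hx
    rw [← hPrange] at hx
    obtain ⟨y, rfl⟩ := LinearMap.mem_range.mp hx
    have := DFunLike.congr_fun hPidem y
    simpa [ContinuousLinearMap.mul_apply] using this
  have hmemP : ∀ x : X, P x ∈ LinearMap.range (Ad : X →ₗ[ℂ] X) := by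
    intro x
    rw [← hPrange]; exact LinearMap.mem_range.mpr ⟨x, rfl⟩
  -- base relations
  have bc : A * Ad = Ad * A := hc
  have b2 : Ad * Ad * A = Ad := by rw [mul_assoc, ← hc, ← mul_assoc, hi]
  have b3 : P * P = P := hPidem
  have b4 : P * Ad = Ad := by
    ext x
    simp only [ContinuousLinearMap.mul_apply]
    exact hPfix (Ad x) (LinearMap.mem_range.mpr ⟨x, rfl⟩)
  have b5 : Ad * A * P = P := by
    ext x
    simp only [ContinuousLinearMap.mul_apply]
    exact hAdA_fix (P x) (hmemP x)
  have t2 : Ad * (Ad * A) = Ad := by rw [← mul_assoc, b2]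
  have t5 : Ad * (A * P) = P := by rw [← mul_assoc, b5]
  -- parametric versions
  have pc : ∀ x : X →L[ℂ] X, A * (Ad * x) = Ad * (A * x) := fun x => by
    rw [← mul_assoc, bc, mul_assoc]
  have p2 : ∀ x : X →L[ℂ] X, Ad * (Ad * (A * x)) = Ad * x := fun x => by
    simp only [← mul_assoc]; rw [b2]
  have p3 : ∀ x : X →L[ℂ] X, P * (P * x) = P * x := fun x => by
    simp only [← mul_assoc]; rw [b3]
  have p4 : ∀ x : X →L[ℂ] X, P * (Ad * x) = Ad * x := fun x => by
    simp only [← mul_assoc]; rw [b4]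
  have p5 : ∀ x : X →L[ℂ] X, Ad * (A * (P * x)) = P * x := fun x => by
    simp only [← mul_assoc]; rw [b5]
  have m1 : ∀ x : X →L[ℂ] X, P * (A * (P * x)) = Ad * (A * (A * (P * x))) := fun x => by
    conv_lhs => rw [← p5 x]
    simp only [mul_assoc, pc, p4]
  have mt1 : P * (A * P) = Ad * (A * (A * P)) := by
    simpa only [mul_one] using m1 1
  -- Ace = Ad * P
  have rAce : Ace = Ad * P := by
    have h0 : Ace = Ad * (A * Ace) := by
      ext x
      simp only [ContinuousLinearMap.mul_apply]
      exact (hAdA_fix (Ace x) (hrng (LinearMap.mem_range.mpr ⟨x, rfl⟩))).symm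
    rw [h0, hPQ]
  -- A * Ace * A = P * A
  have hT : A * Ace * A = P * A := by
    rw [rAce]
    simp only [← mul_assoc]
    rw [bc, b5]
  -- Aot = Ad * Ad * P * A
  have g7 : Aot = Ad * Ad * P * A := by
    rw [hAot, rAce]
    simp only [← mul_assoc]
    rw [mul_assoc Ad P Ad, b4]
  -- group inverse of P * A
  have hGrp : IsGroupInv (P * A) (Ad * Ad * P * A) := by
    refine ⟨?_, ?_, ?_⟩
    · simp only [mul_assoc, pc, p2, p3, p4, p5, m1, mt1, bc, t2, b3, b4, t5]
    · simp only [mul_assoc, pc, p2, p3, p4, p5, m1, mt1, bc, t2, b3, b4, t5]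
    · simp only [mul_assoc, pc, p2, p3, p4, p5, m1, mt1, bc, t2, b3, b4, t5]
  -- range Ad * Ad = range Ad
  have hrangeAd2 : LinearMap.range ((Ad * Ad : X →L[ℂ] X) : X →ₗ[ℂ] X) = LinearMap.range (Ad : X →ₗ[ℂ] X) := by
    apply le_antisymm
    · rintro x hx
      obtain ⟨y, rfl⟩ := LinearMap.mem_range.mp hx
      exact LinearMap.mem_range.mpr ⟨Ad y, rfl⟩
    · rintro x hx
      obtain ⟨y, rfl⟩ := LinearMap.mem_range.mp hx
      refine LinearMap.mem_range.mpr ⟨A y, ?_⟩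
      have := DFunLike.congr_fun b2 y
      simpa [ContinuousLinearMap.mul_apply] using this
  -- Ad * Ad is the gDrazin inverse of A * A
  have hD2 : IsGDrazinInv (A * A) (Ad * Ad) := by
    refine ⟨?_, ?_, ?_⟩
    · simp only [mul_assoc, pc, p2, bc, t2]
    · simp only [mul_assoc, pc, p2, bc, t2]
    · have hNN : A * A - A * A * (A * A) * (Ad * Ad)
          = (A - A * A * Ad) * (A - A * A * Ad) := by
        simp only [mul_sub, sub_mul, mul_assoc, pc, p2, bc, t2]
        abel
      rw [hNN]
      exact quasi_sq hq
  -- the core-EP inverse of A * A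
  have hido : A * A * (Ad * Ad * P) = P := by
    simp only [mul_assoc, pc, p2, p4, p5, bc, t2, t5]
  have hC2 : IsCoreEPInv (A * A) (Ad * Ad) (Ad * Ad * P) := by
    constructor
    · rw [hido]
      exact ⟨b3, hPadj, hPrange.trans hrangeAd2.symm⟩
    · rintro x hx
      obtain ⟨y, rfl⟩ := LinearMap.mem_range.mp hx
      exact LinearMap.mem_range.mpr ⟨P y, rfl⟩
  refine ⟨⟨Ad * Ad * P * A, by rw [hT]; exact hGrp⟩, ?_, ⟨Ad * Ad * P * A, hGrp⟩, ?_,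
    ⟨Ad * Ad, Ad * Ad * P, hD2, hC2⟩, ?_, g7⟩
  · intro G hG
    rw [hT] at hG
    rw [g7]
    exact groupInv_unique hGrp hG
  · intro G hG
    rw [g7]
    exact groupInv_unique hGrp hG
  · intro D C hD hC
    have hDeq : D = Ad * Ad := gdrazin_unique_s14 (A * A) D (Ad * Ad) hD hD2
    rw [hDeq] at hC
    obtain ⟨hCproj, hCrng⟩ := hC
    rw [hrangeAd2] at hCproj hCrng
    have hAAC : A * A * C = P := orthoProj_unique hCproj hP
    have hCeq : C = Ad * Ad * P := by
      ext x
      have hmem : C x ∈ LinearMap.range (Ad : X →ₗ[ℂ] X) := hCrng (LinearMap.mem_range.mpr ⟨x, rfl⟩)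
      obtain ⟨y, hy⟩ := LinearMap.mem_range.mp hmem
      have o1 : Ad * Ad * A * A * Ad = Ad := by
        simp only [mul_assoc, pc, p2, bc, t2]
      have h2 : Ad (Ad (A (A (C x)))) = C x := by
        rw [← hy]
        have := DFunLike.congr_fun o1 y
        simpa [ContinuousLinearMap.mul_apply] using this
      have h3 : A (A (C x)) = P x := by
        have := DFunLike.congr_fun hAAC x
        simpa [ContinuousLinearMap.mul_apply] using this
      show C x = (Ad * Ad * P) x
      simp only [ContinuousLinearMap.mul_apply]
      rw [← h3, h2]
    rw [g7, hCeq]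
end
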